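/- arXiv:nlin/0101027 — 8 statements merged into one kernel-verified Lean document; each statement's English description precedes it below -/
import Mathlib

section
/- Let η > 0, α ∈ ℝ, and let λ ∈ ℂ be nonzero. Let A(x,t) := 12η²·sech²(η(x − 4η²t − α)) be the one-soliton solution of KdV, and define the complex-valued function g(x,t) := (1 + (2iη/λ)·tanh(η(x − 4η²t − α)))·exp(i(λx + λ³t)). Then B(x,t) := ∂_x g(x,t) satisfies the linear equation with coupling constant κ = 1/2, namely ∂_t B + ∂_x[(1/2)·A·B + ∂_x²B] = 0, at every point (x,t) ∈ ℝ². -/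
/-!
Every function `P (tanh θ) · exp (i (λ x + λ³ t))`, with `θ = η (x - 4 η² t - α)` and `P` a
polynomial, is differentiated in `x` and in `t` into a function of the same shape, because
`tanh' = 1 - tanh²`; and the soliton `12 η² sech² θ = 12 η² (1 - tanh² θ)` is itself a polynomial
in `tanh θ`. So the linear equation for `B = ∂ₓ g` reduces to an identity between polynomials in
`tanh θ`, which is a finite computation.
-/

open Complex Polynomial

theorem Real.one_div_cosh_sq (z : ℝ) : (1 / Real.cosh z) ^ 2 = 1 - Real.tanh z ^ 2 := by
  rw [Real.tanh_eq_sinh_div_cosh]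
  have hc := (Real.cosh_pos z).ne'
  field_simp
  linear_combination - Real.cosh_sq_sub_sinh_sq z

theorem Real.hasDerivAt_tanh (y : ℝ) : HasDerivAt Real.tanh (1 - Real.tanh y ^ 2) y := by
  have h := (Real.hasDerivAt_sinh y).div (Real.hasDerivAt_cosh y) (Real.cosh_pos y).ne'
  rw [show Real.sinh / Real.cosh = Real.tanh from
    funext fun z => (Real.tanh_eq_sinh_div_cosh z).symm] at h
  rw [← Real.one_div_cosh_sq]
  exact h.congr_deriv (by rw [← sq, ← sq, Real.cosh_sq_sub_sinh_sq, one_div_pow])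

theorem hasDerivAt_eval_tanh_mul_cexp (P : ℂ[X]) {φ : ℝ → ℝ} {ψ : ℝ → ℂ} {φ' : ℝ} {ψ' : ℂ} {s : ℝ}
    (hφ : HasDerivAt φ φ' s) (hψ : HasDerivAt ψ ψ' s) :
    HasDerivAt (fun s => P.eval (Real.tanh (φ s) : ℂ) * exp (ψ s))
      ((P.derivative.eval (Real.tanh (φ s) : ℂ) * ((1 - Real.tanh (φ s) ^ 2) * φ' : ℝ) +
        P.eval (Real.tanh (φ s) : ℂ) * ψ') * exp (ψ s)) s := by
  have hT := ((Real.hasDerivAt_tanh (φ s)).comp s hφ).ofReal_comp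
  have h := ((P.hasDerivAt _).comp s hT).mul hψ.cexp
  simp only [Function.comp_def] at h
  exact h.congr_deriv (by ring)

noncomputable section

namespace OneSoliton

variable (η α : ℝ) (lam : ℂ)

def travelingCoord (x t : ℝ) : ℝ := η * (x - 4 * η ^ 2 * t - α)

def wave (P : ℂ[X]) (x t : ℝ) : ℂ :=
  P.eval (Real.tanh (travelingCoord η α x t) : ℂ) * exp (I * (lam * x + lam ^ 3 * t))

def xDeriv (P : ℂ[X]) : ℂ[X] := C (η : ℂ) * (1 - X ^ 2) * derivative P + C (I * lam) * P

def tDeriv (P : ℂ[X]) : ℂ[X] :=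
  C (-4 * η ^ 3 : ℂ) * (1 - X ^ 2) * derivative P + C (I * lam ^ 3) * P

theorem wave_add (P Q : ℂ[X]) (x t : ℝ) :
    wave η α lam (P + Q) x t = wave η α lam P x t + wave η α lam Q x t := by
  simp only [wave, eval_add, add_mul]

theorem wave_mul (Q P : ℂ[X]) (x t : ℝ) :
    wave η α lam (Q * P) x t =
      Q.eval (Real.tanh (travelingCoord η α x t) : ℂ) * wave η α lam P x t := by
  simp only [wave, eval_mul, mul_assoc]

theorem wave_zero (x t : ℝ) : wave η α lam 0 x t = 0 := by
  simp [wave]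

theorem hasDerivAt_wave_x (P : ℂ[X]) (x t : ℝ) :
    HasDerivAt (fun y => wave η α lam P y t) (wave η α lam (xDeriv η lam P) x t) x := by
  have hφ : HasDerivAt (travelingCoord η α · t) η x := by
    simpa [travelingCoord] using
      (((hasDerivAt_id x).sub_const (4 * η ^ 2 * t)).sub_const α).const_mul η
  have hψ : HasDerivAt (fun y : ℝ => I * (lam * y + lam ^ 3 * t)) (I * lam) x := by
    simpa using
      ((((hasDerivAt_id (x : ℂ)).const_mul lam).add_const (lam ^ 3 * t)).const_mul I).comp_ofReal
  refine (hasDerivAt_eval_tanh_mul_cexp P hφ hψ).congr_deriv ?_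
  simp only [wave, xDeriv, eval_add, eval_mul, eval_C, eval_sub, eval_one, eval_pow, eval_X]
  push_cast
  ring

theorem hasDerivAt_wave_t (P : ℂ[X]) (x t : ℝ) :
    HasDerivAt (fun τ => wave η α lam P x τ) (wave η α lam (tDeriv η lam P) x t) t := by
  have hφ : HasDerivAt (travelingCoord η α x ·) (-4 * η ^ 3) t := by
    have h_affine : (travelingCoord η α x ·) = fun τ => -4 * η ^ 3 * τ + η * (x - α) := by
      funext τ; simp only [travelingCoord]; ring
    rw [h_affine]
    exact (((hasDerivAt_id' t).const_mul _).add_const _).congr_deriv (mul_one _)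
  have hψ : HasDerivAt (fun τ : ℝ => I * (lam * x + lam ^ 3 * τ)) (I * lam ^ 3) t := by
    simpa using
      ((((hasDerivAt_id (t : ℂ)).const_mul (lam ^ 3)).const_add (lam * x)).const_mul I).comp_ofReal
  refine (hasDerivAt_eval_tanh_mul_cexp P hφ hψ).congr_deriv ?_
  simp only [wave, tDeriv, eval_add, eval_mul, eval_C, eval_sub, eval_one, eval_pow, eval_X]
  push_cast
  ring

theorem deriv_wave_x (P : ℂ[X]) (t : ℝ) :
    deriv (fun y => wave η α lam P y t) = fun x => wave η α lam (xDeriv η lam P) x t :=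
  funext fun x => (hasDerivAt_wave_x η α lam P x t).deriv

theorem deriv_wave_t (P : ℂ[X]) (x : ℝ) :
    deriv (fun τ => wave η α lam P x τ) = fun t => wave η α lam (tDeriv η lam P) x t :=
  funext fun t => (hasDerivAt_wave_t η α lam P x t).deriv

def soliton (x t : ℝ) : ℝ := 12 * η ^ 2 * (1 / Real.cosh (travelingCoord η α x t)) ^ 2

def linearOp (P : ℂ[X]) : ℂ[X] :=
  tDeriv η lam P +
    xDeriv η lam (C (6 * η ^ 2 : ℂ) * (1 - X ^ 2) * P + xDeriv η lam (xDeriv η lam P))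

theorem linear_equation_wave (P : ℂ[X]) (x t : ℝ) :
    deriv (fun τ => wave η α lam P x τ) t +
      deriv (fun y => (1 / 2 : ℂ) * (soliton η α y t : ℂ) * wave η α lam P y t +
        deriv (deriv (fun y' => wave η α lam P y' t)) y) x =
    wave η α lam (linearOp η lam P) x t := by
  have h_flux : (fun y => (1 / 2 : ℂ) * (soliton η α y t : ℂ) * wave η α lam P y t +
      deriv (deriv (fun y' => wave η α lam P y' t)) y) = fun y =>
      wave η α lam (C (6 * η ^ 2 : ℂ) * (1 - X ^ 2) * P + xDeriv η lam (xDeriv η lam P)) y t := by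
    funext y
    rw [deriv_wave_x, deriv_wave_x, wave_add, wave_mul, soliton, Real.one_div_cosh_sq]
    simp only [eval_mul, eval_C, eval_sub, eval_one, eval_pow, eval_X]
    push_cast
    ring
  rw [h_flux, deriv_wave_t, deriv_wave_x, linearOp, wave_add]

def seed : ℂ[X] := 1 + C (2 * I * η / lam) * X

theorem linearOp_xDeriv_seed :
    linearOp η lam (xDeriv η lam (seed η lam)) = 0 := by
  refine Polynomial.funext fun T => ?_
  simp only [linearOp, seed, xDeriv, tDeriv, derivative_add, derivative_sub, derivative_mul,
    derivative_C, derivative_X, derivative_one, derivative_zero, derivative_X_pow, eval_add,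
    eval_mul, eval_C, eval_sub, eval_one, eval_pow, eval_X, eval_zero]
  ring_nf
  simp only [I_sq, I_pow_three, I_pow_four]
  field_simp
  linear_combination 2 * lam ^ 3 * η * T * I * I_pow_four

end OneSoliton

end

theorem one_soliton_exact_linear_wave_half_coupling_general
    (η α : ℝ) (lam : ℂ)
    (A : ℝ → ℝ → ℝ)
    (hA : ∀ x t : ℝ, A x t =
      12 * η ^ 2 * (1 / Real.cosh (η * (x - 4 * η ^ 2 * t - α))) ^ 2)
    (g : ℝ → ℝ → ℂ)
    (hg : ∀ x t : ℝ, g x t =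
      (1 + (2 * Complex.I * (η : ℂ) / lam) *
          (Real.tanh (η * (x - 4 * η ^ 2 * t - α)) : ℂ)) *
        Complex.exp (Complex.I * (lam * (x : ℂ) + lam ^ 3 * (t : ℂ))))
    (B : ℝ → ℝ → ℂ)
    (hB : ∀ x t : ℝ, B x t = deriv (fun y => g y t) x) :
    ∀ x t : ℝ,
      deriv (fun τ => B x τ) t +
        deriv (fun y => (1 / 2 : ℂ) * (A y t : ℂ) * B y t +
          deriv (deriv (fun y' => B y' t)) y) x = 0 := by
  open OneSoliton in
  have hA : A = soliton η α := funext₂ hA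
  have hg : g = wave η α lam (seed η lam) := by
    funext x t
    simp [hg, wave, seed, travelingCoord]
  have hB : B = wave η α lam (xDeriv η lam (seed η lam)) := by
    funext x t
    rw [hB, hg, deriv_wave_x]
  intro x t
  subst hA hB
  rw [linear_equation_wave, linearOp_xDeriv_seed, wave_zero]

/-- For the one-soliton solution `A` of KdV and
`g(x,t) = (1 + (2iη/λ)·tanh(η(x−4η²t−α)))·exp(i(λx+λ³t))` with `λ ≠ 0`,
the function `B := ∂ₓg` solves the linear equation with coupling `κ = 1/2`:
`∂ₜB + ∂ₓ[(1/2)·A·B + ∂ₓ²B] = 0`. -/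
theorem one_soliton_exact_linear_wave_half_coupling
    (η α : ℝ) (hη : 0 < η) (lam : ℂ) (hlam : lam ≠ 0)
    (A : ℝ → ℝ → ℝ)
    (hA : ∀ x t : ℝ, A x t =
      12 * η ^ 2 * (1 / Real.cosh (η * (x - 4 * η ^ 2 * t - α))) ^ 2)
    (g : ℝ → ℝ → ℂ)
    (hg : ∀ x t : ℝ, g x t =
      (1 + (2 * Complex.I * (η : ℂ) / lam) *
          (Real.tanh (η * (x - 4 * η ^ 2 * t - α)) : ℂ)) *
        Complex.exp (Complex.I * (lam * (x : ℂ) + lam ^ 3 * (t : ℂ))))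
    (B : ℝ → ℝ → ℂ)
    (hB : ∀ x t : ℝ, B x t = deriv (fun y => g y t) x) :
    ∀ x t : ℝ,
      deriv (fun τ => B x τ) t +
        deriv (fun y => (1 / 2 : ℂ) * (A y t : ℂ) * B y t +
          deriv (deriv (fun y' => B y' t)) y) x = 0 :=
  one_soliton_exact_linear_wave_half_coupling_general η α lam A hA g hg B hB
end

section
/- Let A : ℝ² → ℝ be three times continuously differentiable and satisfy the KdV equation ∂_t A + ∂_x[(1/2)A² + ∂_x²A] = 0 at every point. Let λ ∈ ℂ and let f : ℝ² → ℂ be three times continuously differentiable and satisfy both Lax pair equations ∂_x²f = −(λ²/4)f − (1/6)A·f and ∂_t f = (1/6)(∂_x A)·f + (λ² − A/3)·∂_x f at every point. Then, for either choice of sign, the function B(x,t) := ∂_x[f(x,t)·exp(±(i/2)(λx + λ³t))] satisfies the linear equation with coupling constant κ = 1/2, namely ∂_t B + ∂_x[(1/2)·A·B + ∂_x²B] = 0, at every point (x,t) ∈ ℝ². -/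
/-!
Put `c = ε·(i/2)·λ`, so that `c² = -λ²/4`, and `e(x, t) = exp(c·(x + λ²t))`; then `B = ∂ₓg` for
`g = f·e`. Using the first Lax equation twice, `∂ₓ³g + ½A·∂ₓg` becomes `-e` times a first-order
expression in `f`, namely `cλ²f + (1/6)(∂ₓA)f + (λ² - A/3)∂ₓf`, while `∂ₜg = (∂ₜf + cλ²f)·e`.
The second Lax equation makes these cancel, so `∂ₜg + ½A·∂ₓg + ∂ₓ³g = 0`. Differentiating in `x`
and exchanging `∂ₜ∂ₓg = ∂ₓ∂ₜg` (Schwarz, `g` being `C²`) gives the equation for `B`.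
-/

open Complex

section Schwarz

variable {E : Type*} [NormedAddCommGroup E] [NormedSpace ℝ E]

lemma deriv_comp_prodMk_left_eq_fderiv {H : ℝ × ℝ → E} {x t : ℝ}
    (hH : DifferentiableAt ℝ H (x, t)) :
    deriv (fun y => H (y, t)) x = fderiv ℝ H (x, t) (1, 0) :=
  (hH.hasFDerivAt.comp_hasDerivAt x ((hasDerivAt_id x).prodMk (hasDerivAt_const x t))).deriv

lemma deriv_comp_prodMk_right_eq_fderiv {H : ℝ × ℝ → E} {x t : ℝ}
    (hH : DifferentiableAt ℝ H (x, t)) :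
    deriv (fun τ => H (x, τ)) t = fderiv ℝ H (x, t) (0, 1) :=
  (hH.hasFDerivAt.comp_hasDerivAt t ((hasDerivAt_const t x).prodMk (hasDerivAt_id t))).deriv

theorem deriv_deriv_comm {F : ℝ → ℝ → E} (hF : ContDiff ℝ 2 (fun p : ℝ × ℝ => F p.1 p.2))
    (x t : ℝ) :
    deriv (fun τ => deriv (fun y => F y τ) x) t =
      deriv (fun y => deriv (fun τ => F y τ) t) x := by
  set G : ℝ × ℝ → E := fun p => F p.1 p.2
  have hG : Differentiable ℝ G := hF.differentiable (by norm_num)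
  have hG' : Differentiable ℝ (fderiv ℝ G) :=
    (hF.fderiv_right (m := 1) (by norm_num)).differentiable one_ne_zero
  have hG'_apply (v : ℝ × ℝ) : Differentiable ℝ (fun q => fderiv ℝ G q v) :=
    hG'.clm_apply (differentiable_const v)
  have fderiv_apply (v w : ℝ × ℝ) :
      fderiv ℝ (fun q => fderiv ℝ G q v) (x, t) w = fderiv ℝ (fderiv ℝ G) (x, t) w v := by
    simp [fderiv_clm_apply (hG' (x, t)) (differentiableAt_const v)]
  calc deriv (fun τ => deriv (fun y => F y τ) x) t
      = deriv (fun τ => fderiv ℝ G (x, τ) (1, 0)) t := by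
        congr 1; funext τ; exact deriv_comp_prodMk_left_eq_fderiv (hG (x, τ))
    _ = fderiv ℝ (fderiv ℝ G) (x, t) (0, 1) (1, 0) := by
        rw [deriv_comp_prodMk_right_eq_fderiv (hG'_apply _ _), fderiv_apply]
    _ = fderiv ℝ (fderiv ℝ G) (x, t) (1, 0) (0, 1) :=
        (hF.contDiffAt.isSymmSndFDerivAt (by simp)).eq _ _
    _ = deriv (fun y => fderiv ℝ G (y, t) (0, 1)) x := by
        rw [deriv_comp_prodMk_left_eq_fderiv (hG'_apply _ _), fderiv_apply]
    _ = deriv (fun y => deriv (fun τ => F y τ) t) x := by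
        congr 1; funext y; exact (deriv_comp_prodMk_right_eq_fderiv (hG (y, t))).symm

end Schwarz

lemma HasDerivAt.mul_of_hasDerivAt_self_mul {u e : ℝ → ℂ} {u' c : ℂ} {y : ℝ}
    (hu : HasDerivAt u u' y) (he : HasDerivAt e (c * e y) y) :
    HasDerivAt (fun y => u y * e y) ((u' + c * u y) * e y) y :=
  (hu.mul he).congr_deriv (by ring)

theorem half_mul_deriv_add_deriv_deriv_deriv_mul_of_lax {u a a' e : ℝ → ℂ} {μ c : ℂ}
    (hu : ContDiff ℝ 2 u) (ha : ∀ y, HasDerivAt a (a' y) y)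
    (he : ∀ y, HasDerivAt e (c * e y) y) (hc : c ^ 2 = -(μ ^ 2 / 4))
    (hLax : ∀ y, deriv (deriv u) y = -(μ ^ 2 / 4) * u y - (1 / 6) * a y * u y) (y : ℝ) :
    (1 / 2) * a y * deriv (fun y => u y * e y) y + deriv (deriv (deriv (fun y => u y * e y))) y =
      -(c * μ ^ 2 * u y + (1 / 6) * a' y * u y + (μ ^ 2 - a y / 3) * deriv u y) * e y := by
  have hu' (y : ℝ) : HasDerivAt u (deriv u y) y :=
    (hu.differentiable (by norm_num) y).hasDerivAt
  have hu'' (y : ℝ) : HasDerivAt (deriv u) (-(μ ^ 2 / 4) * u y - (1 / 6) * a y * u y) y :=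
    hLax y ▸ (hu.differentiable_deriv_two y).hasDerivAt
  have h1 : deriv (fun y => u y * e y) = fun y => (deriv u y + c * u y) * e y :=
    funext fun y => ((hu' y).mul_of_hasDerivAt_self_mul (he y)).deriv
  have h2 : deriv (deriv (fun y => u y * e y)) =
      fun y => (2 * c * deriv u y - (μ ^ 2 / 2 + 1 / 6 * a y) * u y) * e y := by
    rw [h1]; funext y
    rw [(((hu'' y).fun_add ((hu' y).const_mul c)).mul_of_hasDerivAt_self_mul (he y)).deriv]
    linear_combination u y * e y * hc
  have h3 := (((hu'' y).const_mul (2 * c)).fun_sub ((((ha y).const_mul (1 / 6)).const_add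
    (μ ^ 2 / 2)).fun_mul (hu' y))).mul_of_hasDerivAt_self_mul (he y)
  rw [h2, h3.deriv, h1]
  linear_combination 2 * deriv u y * e y * hc

theorem linear_eq_deriv_of_potential_eq {g a : ℝ → ℝ → ℂ}
    (hg : ContDiff ℝ 2 (fun p : ℝ × ℝ => g p.1 p.2)) (κ : ℂ)
    (h : ∀ y τ, deriv (fun s => g y s) τ + (κ * a y τ * deriv (fun y' => g y' τ) y +
      deriv (deriv (deriv (fun y' => g y' τ))) y) = 0) (x t : ℝ) :
    deriv (fun τ => deriv (fun y => g y τ) x) t + deriv (fun y => κ * a y t *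
      deriv (fun y' => g y' t) y + deriv (deriv (deriv (fun y' => g y' t))) y) x = 0 := by
  have hQ : (fun y => κ * a y t * deriv (fun y' => g y' t) y +
      deriv (deriv (deriv (fun y' => g y' t))) y) = fun y => -deriv (fun s => g y s) t :=
    funext fun y => eq_neg_of_add_eq_zero_right (h y t)
  rw [deriv_deriv_comm hg, hQ, deriv.fun_neg, add_neg_cancel]

theorem lax_eigenfunction_gives_half_coupling_solution_general
    (A : ℝ → ℝ → ℝ) (hA : ContDiff ℝ 3 (fun p : ℝ × ℝ => A p.1 p.2))
    (lam : ℂ) (f : ℝ → ℝ → ℂ)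
    (hf : ContDiff ℝ 3 (fun p : ℝ × ℝ => f p.1 p.2))
    (hLax1 : ∀ x t : ℝ,
      deriv (deriv (fun y => f y t)) x =
        -(lam ^ 2 / 4) * f x t - (1 / 6) * (A x t : ℂ) * f x t)
    (hLax2 : ∀ x t : ℝ,
      deriv (fun τ => f x τ) t =
        (1 / 6) * (deriv (fun y => A y t) x : ℂ) * f x t +
          (lam ^ 2 - (A x t : ℂ) / 3) * deriv (fun y => f y t) x)
    (ε : ℂ) (hε : ε = 1 ∨ ε = -1)
    (B : ℝ → ℝ → ℂ)
    (hB : ∀ x t : ℝ, B x t =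
      deriv (fun y => f y t *
        Complex.exp (ε * (Complex.I / 2) * (lam * (y : ℂ) + lam ^ 3 * (t : ℂ)))) x) :
    ∀ x t : ℝ,
      deriv (fun τ => B x τ) t +
        deriv (fun y => (1 / 2 : ℂ) * (A y t : ℂ) * B y t +
          deriv (deriv (fun y' => B y' t)) y) x = 0 := by
  set c := ε * (I / 2) * lam
  have hc : c ^ 2 = -(lam ^ 2 / 4) := by
    have hε2 : ε ^ 2 = 1 := by rcases hε with rfl | rfl <;> norm_num
    linear_combination (I ^ 2 * lam ^ 2 / 4) * hε2 + (lam ^ 2 / 4) * I_sq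
  set e : ℝ → ℝ → ℂ := fun y τ => cexp (ε * (I / 2) * (lam * (y : ℂ) + lam ^ 3 * (τ : ℂ)))
  have he_x (y τ : ℝ) : HasDerivAt (fun y => e y τ) (c * e y τ) y :=
    ((((hasDerivAt_id (y : ℂ)).const_mul lam).add_const (lam ^ 3 * τ)).const_mul
      (ε * (I / 2))).cexp.comp_ofReal.congr_deriv (by simp only [e, c, id]; ring)
  have he_t (y τ : ℝ) : HasDerivAt (fun τ => e y τ) (c * lam ^ 2 * e y τ) τ :=
    ((((hasDerivAt_id (τ : ℂ)).const_mul (lam ^ 3)).const_add (lam * y)).const_mul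
      (ε * (I / 2))).cexp.comp_ofReal.congr_deriv (by simp only [e, c, id]; ring)
  obtain rfl : B = fun x t => deriv (fun y => f y t * e y t) x := funext₂ hB
  have hofReal {n : WithTop ℕ∞} : ContDiff ℝ n (fun x : ℝ => (x : ℂ)) := ofRealCLM.contDiff
  have hf2 : ContDiff ℝ 2 (fun p : ℝ × ℝ => f p.1 p.2) := hf.of_le (by norm_num)
  refine linear_eq_deriv_of_potential_eq (a := fun y τ => (A y τ : ℂ))
    (by simp only [e]; fun_prop) (1 / 2) fun y τ => ?_
  have hA_x : ContDiff ℝ 1 (fun y => (A y τ : ℂ)) :=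
    (hofReal.comp (hA.comp (contDiff_id.prodMk contDiff_const))).of_le (by norm_num)
  have hf_x : ContDiff ℝ 2 (fun y => f y τ) :=
    (hf.comp (contDiff_id.prodMk contDiff_const)).of_le (by norm_num)
  have hf_t : Differentiable ℝ (fun s => f y s) :=
    (hf.comp (contDiff_const.prodMk contDiff_id)).differentiable (by norm_num)
  rw [half_mul_deriv_add_deriv_deriv_deriv_mul_of_lax hf_x
      (fun y => (hA_x.differentiable one_ne_zero y).hasDerivAt) (he_x · τ) hc (hLax1 · τ),
    ((hf_t τ).hasDerivAt.mul_of_hasDerivAt_self_mul (he_t y τ)).deriv]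
  linear_combination e y τ * hLax2 y τ

/-- If `A` is a C³ solution of KdV and `f` is a C³ simultaneous
solution of both Lax pair equations with spectral parameter `λ`, then for
either choice of sign `ε = ±1`, the function
`B := ∂ₓ[f·exp(ε(i/2)(λx+λ³t))]` solves the linear equation with `κ = 1/2`. -/
theorem lax_eigenfunction_gives_half_coupling_solution
    (A : ℝ → ℝ → ℝ) (hA : ContDiff ℝ 3 (fun p : ℝ × ℝ => A p.1 p.2))
    (hKdV : ∀ x t : ℝ,
      deriv (fun τ => A x τ) t +
        deriv (fun y => (1 / 2) * (A y t) ^ 2 +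
          deriv (deriv (fun y' => A y' t)) y) x = 0)
    (lam : ℂ) (f : ℝ → ℝ → ℂ)
    (hf : ContDiff ℝ 3 (fun p : ℝ × ℝ => f p.1 p.2))
    (hLax1 : ∀ x t : ℝ,
      deriv (deriv (fun y => f y t)) x =
        -(lam ^ 2 / 4) * f x t - (1 / 6) * (A x t : ℂ) * f x t)
    (hLax2 : ∀ x t : ℝ,
      deriv (fun τ => f x τ) t =
        (1 / 6) * (deriv (fun y => A y t) x : ℂ) * f x t +
          (lam ^ 2 - (A x t : ℂ) / 3) * deriv (fun y => f y t) x)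
    (ε : ℂ) (hε : ε = 1 ∨ ε = -1)
    (B : ℝ → ℝ → ℂ)
    (hB : ∀ x t : ℝ, B x t =
      deriv (fun y => f y t *
        Complex.exp (ε * (Complex.I / 2) * (lam * (y : ℂ) + lam ^ 3 * (t : ℂ)))) x) :
    ∀ x t : ℝ,
      deriv (fun τ => B x τ) t +
        deriv (fun y => (1 / 2 : ℂ) * (A y t : ℂ) * B y t +
          deriv (deriv (fun y' => B y' t)) y) x = 0 :=
  lax_eigenfunction_gives_half_coupling_solution_general A hA lam f hf hLax1 hLax2 ε hε B hB
end

section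
/- Let A : ℝ² → ℝ be three times continuously differentiable, let λ ∈ ℂ, and let f : ℝ² → ℂ be three times continuously differentiable with f(x,t) ≠ 0 for every (x,t), satisfying both Lax pair equations ∂_x²f = −(λ²/4)f − (1/6)A·f and ∂_t f = (1/6)(∂_x A)·f + (λ² − A/3)·∂_x f at every point. Then A satisfies the KdV equation: ∂_t A + ∂_x[(1/2)A² + ∂_x²A] = 0 at every point (x,t) ∈ ℝ². -/
/-!
The Lax equations give `f_xx` and `f_t` as first-order expressions in `f` and `f_x`. Since `f` is
`C³`, mixed partials commute and `∂_t (f_xx) = ∂_x² (f_t)`; expanding both sides with the Lax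
equations (using the first one again for `f_xx` and `f_xxx`), every term cancels except
`-(1/6) (A_t + A A_x + A_xxx) f`. As `f` never vanishes, `A` solves KdV.
-/

open Complex Function

section DirDeriv

variable {V E : Type*} [NormedAddCommGroup V] [NormedSpace ℝ V]
  [NormedAddCommGroup E] [NormedSpace ℝ E]

noncomputable def dirDeriv (v : V) (g : V → E) : V → E := fun p => fderiv ℝ g p v

theorem ContDiff.dirDeriv {m n : WithTop ℕ∞} {g : V → E} (hg : ContDiff ℝ n g) (hmn : m + 1 ≤ n)
    (v : V) : ContDiff ℝ m (dirDeriv v g) :=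
  (ContinuousLinearMap.apply ℝ E v).contDiff.comp (hg.fderiv_right hmn)

theorem ContDiff.differentiable_dirDeriv {n : WithTop ℕ∞} {g : V → E} (hg : ContDiff ℝ n g)
    (hn : 2 ≤ n) (v : V) : Differentiable ℝ (_root_.dirDeriv v g) :=
  (hg.dirDeriv (m := 1) (one_add_one_eq_two.le.trans hn) v).differentiable one_ne_zero

theorem dirDeriv_comm {g : V → E} (hg : ContDiff ℝ 2 g) (v w : V) :
    dirDeriv v (dirDeriv w g) = dirDeriv w (dirDeriv v g) := by
  have hdg : Differentiable ℝ (fderiv ℝ g) :=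
    (hg.fderiv_right (m := 1) le_rfl).differentiable one_ne_zero
  have hsnd (p u u' : V) : dirDeriv u (dirDeriv u' g) p = fderiv ℝ (fderiv ℝ g) p u u' := by
    change fderiv ℝ (fun q => fderiv ℝ g q u') p u = _
    simp [fderiv_clm_apply (hdg p) (differentiableAt_const u')]
  funext p
  rw [hsnd, hsnd]
  exact hg.contDiffAt.isSymmSndFDerivAt (by simp) v w

variable {v : V}

theorem dirDeriv_const (c : E) : dirDeriv v (fun _ => c) = 0 := by
  funext p
  simp [dirDeriv]

theorem dirDeriv_add {f g : V → E} (hf : Differentiable ℝ f) (hg : Differentiable ℝ g) :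
    dirDeriv v (fun p => f p + g p) = fun p => dirDeriv v f p + dirDeriv v g p := by
  funext p
  simp [dirDeriv, fderiv_fun_add (hf p) (hg p)]

theorem dirDeriv_sub {f g : V → E} (hf : Differentiable ℝ f) (hg : Differentiable ℝ g) :
    dirDeriv v (fun p => f p - g p) = fun p => dirDeriv v f p - dirDeriv v g p := by
  funext p
  simp [dirDeriv, fderiv_fun_sub (hf p) (hg p)]

theorem dirDeriv_mul {𝔸 : Type*} [NormedCommRing 𝔸] [NormedAlgebra ℝ 𝔸] {f g : V → 𝔸}
    (hf : Differentiable ℝ f) (hg : Differentiable ℝ g) :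
    dirDeriv v (fun p => f p * g p) = fun p => f p * dirDeriv v g p + dirDeriv v f p * g p := by
  funext p
  simp [dirDeriv, fderiv_fun_mul (hf p) (hg p), mul_comm]

theorem dirDeriv_div_const {𝕜 : Type*} [NormedField 𝕜] [NormedAlgebra ℝ 𝕜] {f : V → 𝕜}
    (hf : Differentiable ℝ f) (c : 𝕜) :
    dirDeriv v (fun p => f p / c) = fun p => dirDeriv v f p / c := by
  simp only [div_eq_mul_inv]
  rw [dirDeriv_mul hf (differentiable_const _), dirDeriv_const]
  simp

theorem dirDeriv_ofReal {u : V → ℝ} (hu : Differentiable ℝ u) :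
    dirDeriv v (fun p => (u p : ℂ)) = fun p => ((dirDeriv v u p : ℝ) : ℂ) := by
  funext p
  exact congrArg (· v) (ofRealCLM.hasFDerivAt.comp p (hu p).hasFDerivAt).fderiv

end DirDeriv

section Slices

variable {E : Type*} [NormedAddCommGroup E] [NormedSpace ℝ E] {g : ℝ × ℝ → E}

theorem deriv_slice_fst (hg : Differentiable ℝ g) (t : ℝ) :
    deriv (fun x => g (x, t)) = fun x => dirDeriv (1, 0) g (x, t) := by
  funext x
  exact ((hg _).hasFDerivAt.comp_hasDerivAt x
    ((hasDerivAt_id x).prodMk (hasDerivAt_const x t))).deriv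

theorem deriv_slice_snd (hg : Differentiable ℝ g) (x : ℝ) :
    deriv (fun t => g (x, t)) = fun t => dirDeriv (0, 1) g (x, t) := by
  funext t
  exact ((hg _).hasFDerivAt.comp_hasDerivAt t
    ((hasDerivAt_const t x).prodMk (hasDerivAt_id t))).deriv

end Slices

local notation "∂ₓ" => dirDeriv ((1, 0) : ℝ × ℝ)
local notation "∂ₜ" => dirDeriv ((0, 1) : ℝ × ℝ)

theorem kdv_mul_eq_zero_of_lax_pair {a F : ℝ × ℝ → ℂ} {lam : ℂ}
    (ha : ContDiff ℝ 3 a) (hF : ContDiff ℝ 3 F)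
    (hxx : ∂ₓ (∂ₓ F) = fun p => -(lam ^ 2 / 4) * F p - 1 / 6 * a p * F p)
    (ht : ∂ₜ F = fun p => 1 / 6 * ∂ₓ a p * F p + (lam ^ 2 - a p / 3) * ∂ₓ F p) (p : ℝ × ℝ) :
    (∂ₜ a p + a p * ∂ₓ a p + ∂ₓ (∂ₓ (∂ₓ a)) p) * F p = 0 := by
  have hFx : ContDiff ℝ 2 (∂ₓ F) := hF.dirDeriv (by norm_num) _
  have hax : ContDiff ℝ 2 (∂ₓ a) := ha.dirDeriv (by norm_num) _
  have da : Differentiable ℝ a := ha.differentiable (by norm_num)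
  have dF : Differentiable ℝ F := hF.differentiable (by norm_num)
  have dFx : Differentiable ℝ (∂ₓ F) := hF.differentiable_dirDeriv (by norm_num) _
  have dax : Differentiable ℝ (∂ₓ a) := ha.differentiable_dirDeriv (by norm_num) _
  have daxx : Differentiable ℝ (∂ₓ (∂ₓ a)) := hax.differentiable_dirDeriv le_rfl _
  have compat : ∂ₜ (∂ₓ (∂ₓ F)) = ∂ₓ (∂ₓ (∂ₜ F)) := by
    rw [dirDeriv_comm hFx, dirDeriv_comm (hF.of_le (by norm_num))]
  have key := congrFun compat p
  simp (disch := fun_prop) only [dirDeriv_add, dirDeriv_sub, dirDeriv_mul, dirDeriv_div_const,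
    dirDeriv_const, hxx, ht, Pi.zero_apply] at key
  linear_combination (-6) * key

theorem kdv_of_lax_pair {u : ℝ × ℝ → ℝ} {F : ℝ × ℝ → ℂ} {lam : ℂ}
    (hu : ContDiff ℝ 3 u) (hF : ContDiff ℝ 3 F) (hF0 : ∀ p, F p ≠ 0)
    (hxx : ∂ₓ (∂ₓ F) = fun p => -(lam ^ 2 / 4) * F p - 1 / 6 * (u p : ℂ) * F p)
    (ht : ∂ₜ F = fun p =>
      1 / 6 * ((∂ₓ u p : ℝ) : ℂ) * F p + (lam ^ 2 - (u p : ℂ) / 3) * ∂ₓ F p) :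
    ∂ₜ u + ∂ₓ (fun p => 1 / 2 * u p ^ 2 + ∂ₓ (∂ₓ u) p) = 0 := by
  have hux : ContDiff ℝ 2 (∂ₓ u) := hu.dirDeriv (by norm_num) _
  have du : Differentiable ℝ u := hu.differentiable (by norm_num)
  have dux : Differentiable ℝ (∂ₓ u) := hu.differentiable_dirDeriv (by norm_num) _
  have duxx : Differentiable ℝ (∂ₓ (∂ₓ u)) := hux.differentiable_dirDeriv le_rfl _
  funext p
  have key := kdv_mul_eq_zero_of_lax_pair (a := fun p => (u p : ℂ))
    (ofRealCLM.contDiff.comp hu) hF hxx (by simpa only [dirDeriv_ofReal du] using ht) p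
  simp only [dirDeriv_ofReal du, dirDeriv_ofReal dux, dirDeriv_ofReal duxx, mul_eq_zero, hF0,
    or_false] at key
  norm_cast at key
  simp (disch := fun_prop) only [pow_two, dirDeriv_add, dirDeriv_mul, dirDeriv_const,
    Pi.add_apply, Pi.zero_apply]
  linear_combination key

/-- If `A` is C³ and `f` is a nowhere-vanishing C³ simultaneous
solution of both Lax pair equations with spectral parameter `λ`, then `A`
satisfies the KdV equation `∂ₜA + ∂ₓ[(1/2)A² + ∂ₓ²A] = 0`. -/
theorem lax_pair_compatibility_implies_kdv
    (A : ℝ → ℝ → ℝ) (hA : ContDiff ℝ 3 (fun p : ℝ × ℝ => A p.1 p.2))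
    (lam : ℂ) (f : ℝ → ℝ → ℂ)
    (hf : ContDiff ℝ 3 (fun p : ℝ × ℝ => f p.1 p.2))
    (hfne : ∀ x t : ℝ, f x t ≠ 0)
    (hLax1 : ∀ x t : ℝ,
      deriv (deriv (fun y => f y t)) x =
        -(lam ^ 2 / 4) * f x t - (1 / 6) * (A x t : ℂ) * f x t)
    (hLax2 : ∀ x t : ℝ,
      deriv (fun τ => f x τ) t =
        (1 / 6) * (deriv (fun y => A y t) x : ℂ) * f x t +
          (lam ^ 2 - (A x t : ℂ) / 3) * deriv (fun y => f y t) x) :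
    ∀ x t : ℝ,
      deriv (fun τ => A x τ) t +
        deriv (fun y => (1 / 2) * (A y t) ^ 2 +
          deriv (deriv (fun y' => A y' t)) y) x = 0 := by
  have hu : ContDiff ℝ 3 (uncurry A) := hA
  have hF : ContDiff ℝ 3 (uncurry f) := hf
  have du : Differentiable ℝ (uncurry A) := hu.differentiable (by norm_num)
  have dF : Differentiable ℝ (uncurry f) := hF.differentiable (by norm_num)
  have hux : ContDiff ℝ 2 (∂ₓ (uncurry A)) := hu.dirDeriv (by norm_num) _
  have dux : Differentiable ℝ (∂ₓ (uncurry A)) := hu.differentiable_dirDeriv (by norm_num) _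
  have duxx : Differentiable ℝ (∂ₓ (∂ₓ (uncurry A))) := hux.differentiable_dirDeriv le_rfl _
  have dFx : Differentiable ℝ (∂ₓ (uncurry f)) := hF.differentiable_dirDeriv (by norm_num) _
  have duC : Differentiable ℝ fun p => ((uncurry A p : ℝ) : ℂ) := by fun_prop
  -- `(deriv (fun y => A y t) x : ℂ)` in `hLax2` elaborates to the derivative of `fun y => (A y t : ℂ)`
  simp only [← uncurry_apply_pair A, ← uncurry_apply_pair f, deriv_slice_fst du,
    deriv_slice_snd du, deriv_slice_fst dF, deriv_slice_snd dF, deriv_slice_fst dux,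
    deriv_slice_fst dFx, deriv_slice_fst duC, dirDeriv_ofReal du] at hLax1 hLax2 hfne ⊢
  intro x t
  have hkdv := kdv_of_lax_pair hu hF (fun p => hfne p.1 p.2) (funext fun p => hLax1 p.1 p.2)
    (funext fun p => hLax2 p.1 p.2)
  rw [deriv_slice_fst (g := fun p => 1 / 2 * uncurry A p ^ 2 + ∂ₓ (∂ₓ (uncurry A)) p)
    (by fun_prop) t]
  exact congrFun hkdv (x, t)
end

section
/- Let N ≥ 2 be an integer and let η₁, ..., η_N be distinct positive real numbers. For k = 1, ..., N define D_k := ∏_{n≠k}(2iη_k − 2iη_n) · ∏_{n=1}^{N}(2iη_k + 2iη_n). Then for every odd integer p with 1 ≤ p ≤ 2N − 3, the sum I_p := Σ_{k=1}^{N} (2iη_k)^p / D_k equals 0. -/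
/-!
Write `x_k = 2iη_k` and `p = 2m + 1`. Since `(x_k - x_n)(x_k + x_n) = x_k² - x_n²` and the factor
`n = k` of the second product is `2x_k`, we get `x_k^p / D_k = (x_k²)^m / ∏_{n≠k}(x_k² - x_n²) / 2`.
The nodes `z_k = x_k² = -4η_k²` are distinct, and `Σ_k z_k^m / ∏_{n≠k}(z_k - z_n)` is the coefficient of
`X^(N-1)` in the Lagrange interpolant of `X^m` at the nodes `z_k`, i.e. in `X^m` itself, which is `0`
because `m < N - 1`.
-/

open Complex Finset

open Polynomial in
theorem Lagrange.sum_pow_div_prod_sub_eq_zero {F ι : Type*} [Field F] [DecidableEq ι]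
    {s : Finset ι} {v : ι → F} (hvs : Set.InjOn v s) {m : ℕ} (hm : m + 1 < #s) :
    ∑ i ∈ s, v i ^ m / ∏ j ∈ s.erase i, (v i - v j) = 0 := by
  have hdeg : ((X : F[X]) ^ m).degree < #s := by
    rw [degree_X_pow]
    exact_mod_cast m.lt_succ_self.trans hm
  simpa [coeff_X_pow, show #s - 1 ≠ m by omega, eq_comm] using Lagrange.coeff_eq_sum hvs hdeg

theorem Finset.prod_erase_sub_mul_prod_add {R ι : Type*} [CommRing R] [DecidableEq ι]
    {s : Finset ι} {k : ι} (hk : k ∈ s) (x : ι → R) :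
    (∏ n ∈ s.erase k, (x k - x n)) * ∏ n ∈ s, (x k + x n) =
      2 * x k * ∏ n ∈ s.erase k, (x k ^ 2 - x n ^ 2) := by
  rw [← mul_prod_erase s (fun n => x k + x n) hk, mul_left_comm, ← prod_mul_distrib, two_mul]
  congr 1
  exact prod_congr rfl fun n _ => by ring

theorem residue_sum_vanishes_odd_powers_general
    (N : ℕ) (η : Fin N → ℝ)
    (hpos : ∀ k, 0 < η k) (hdist : Function.Injective η)
    (D : Fin N → ℂ)
    (hD : ∀ k, D k =
      (∏ n ∈ Finset.univ.erase k,
          (2 * Complex.I * (η k : ℂ) - 2 * Complex.I * (η n : ℂ))) *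
        ∏ n : Fin N, (2 * Complex.I * (η k : ℂ) + 2 * Complex.I * (η n : ℂ)))
    (p : ℕ) (hodd : Odd p) (hp2 : p ≤ 2 * N - 3) :
    ∑ k : Fin N, (2 * Complex.I * (η k : ℂ)) ^ p / D k = 0 := by
  obtain ⟨m, rfl⟩ := hodd
  have hsq_inj : Function.Injective fun k => (2 * I * (η k : ℂ)) ^ 2 := fun a b hab => by
    have : η a ^ 2 = η b ^ 2 := by simpa [mul_pow, ← ofReal_pow] using hab
    exact hdist ((sq_eq_sq₀ (hpos a).le (hpos b).le).mp this)
  have hterm (k : Fin N) : (2 * I * (η k : ℂ)) ^ (2 * m + 1) / D k =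
      ((2 * I * (η k : ℂ)) ^ 2) ^ m /
        (∏ n ∈ univ.erase k, ((2 * I * (η k : ℂ)) ^ 2 - (2 * I * (η n : ℂ)) ^ 2)) / 2 := by
    have hη : (η k : ℂ) ≠ 0 := ofReal_ne_zero.mpr (hpos k).ne'
    rw [hD k, prod_erase_sub_mul_prod_add (mem_univ k) fun n => 2 * I * (η n : ℂ), pow_succ,
      pow_mul]
    generalize ∏ n ∈ univ.erase k, ((2 * I * (η k : ℂ)) ^ 2 - (2 * I * (η n : ℂ)) ^ 2) = P
    field_simp
  rw [sum_congr rfl fun k _ => hterm k, ← Finset.sum_div,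
    Lagrange.sum_pow_div_prod_sub_eq_zero hsq_inj.injOn (by simp; omega), zero_div]

/-- For distinct positive `η₁, ..., η_N` (`N ≥ 2`) and
`D_k = ∏_{n≠k}(2iη_k − 2iη_n)·∏_{n=1}^N(2iη_k + 2iη_n)`, the sum
`I_p = Σ_k (2iη_k)^p / D_k` vanishes for every odd `p` with `1 ≤ p ≤ 2N−3`. -/
theorem residue_sum_vanishes_odd_powers
    (N : ℕ) (hN : 2 ≤ N) (η : Fin N → ℝ)
    (hpos : ∀ k, 0 < η k) (hdist : Function.Injective η)
    (D : Fin N → ℂ)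
    (hD : ∀ k, D k =
      (∏ n ∈ Finset.univ.erase k,
          (2 * Complex.I * (η k : ℂ) - 2 * Complex.I * (η n : ℂ))) *
        ∏ n : Fin N, (2 * Complex.I * (η k : ℂ) + 2 * Complex.I * (η n : ℂ)))
    (p : ℕ) (hodd : Odd p) (hp1 : 1 ≤ p) (hp2 : p ≤ 2 * N - 3) :
    ∑ k : Fin N, (2 * Complex.I * (η k : ℂ)) ^ p / D k = 0 :=
  residue_sum_vanishes_odd_powers_general N η hpos hdist D hD p hodd hp2
end

section
/- Let N ≥ 1 be an integer and let η₁, ..., η_N be distinct positive real numbers. For k = 1, ..., N define D_k := ∏_{n≠k}(2iη_k − 2iη_n) · ∏_{n=1}^{N}(2iη_k + 2iη_n). Then 1/∏_{n=1}^{N}(4η_n²) + 2·Σ_{k=1}^{N} 1/(2iη_k·D_k) = 0. -/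
/-!
The rational function is `1 / P` for the odd polynomial `P(λ) = λ ∏ₙ (λ² + 4ηₙ²)`, whose roots
`0, ±2iηₖ` are simple. For a polynomial with simple roots and degree at least two the residues
`1 / P'(x)` sum to zero: this is the top coefficient of the Lagrange interpolant of the constant `1`.
Here `P'(0) = ∏ₙ 4ηₙ²` and `P'(2iηₖ) = 2iηₖ Dₖ`, and `P'` is even, so the roots `±2iηₖ` contribute
equally.
-/

open Complex Finset Polynomial

namespace Lagrange

variable {F ι : Type*} [Field F] [DecidableEq ι] {s : Finset ι} {v : ι → F}

theorem sum_nodalWeight_eq_zero (hvs : Set.InjOn v s) (hs : 2 ≤ #s) :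
    ∑ i ∈ s, nodalWeight s v i = 0 := by
  have h := coeff_eq_sum hvs (P := 1) (by rw [degree_one]; exact_mod_cast (by omega : 0 < #s))
  simpa [coeff_one, show #s - 1 ≠ 0 by omega, nodalWeight, prod_inv_distrib] using h.symm

theorem sum_inv_eval_derivative_nodal_eq_zero (hvs : Set.InjOn v s) (hs : 2 ≤ #s) :
    ∑ i ∈ s, (eval (v i) (derivative (nodal s v)))⁻¹ = 0 := by
  rw [← sum_nodalWeight_eq_zero hvs hs]
  exact sum_congr rfl fun i hi => (nodalWeight_eq_eval_derivative_nodal hi).symm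

end Lagrange

namespace Polynomial

variable {R : Type*} [CommRing R]

theorem eval_neg_derivative_of_comp_neg_X {p : R[X]} (hp : p.comp (-X) = -p) (x : R) :
    eval (-x) (derivative p) = eval x (derivative p) := by
  have h := congrArg derivative hp
  rw [derivative_comp, derivative_neg, derivative_X, derivative_neg] at h
  simpa using congrArg (eval x) h

theorem eval_derivative_X_mul_mul_of_eval_eq_zero {p q : R[X]} {x : R} (hp : eval x p = 0) :
    eval x (derivative (X * p * q)) = x * eval x (derivative p) * eval x q := by
  simp only [derivative_mul, derivative_X, eval_add, eval_mul, eval_X, eval_one, hp]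
  ring

end Polynomial

section SymmetricNodes

open Lagrange

variable {F ι : Type*} [Field F] {a : ι → F}

def symmetricNodes (a : ι → F) : Option (ι ⊕ ι) → F :=
  fun o => o.elim 0 (Sum.elim a (-a))

theorem symmetricNodes_injective (ha : Function.Injective a) (hadd : ∀ k n, a k + a n ≠ 0) :
    Function.Injective (symmetricNodes a) := by
  rintro (_ | k | k) (_ | n | n) h <;> simp only [symmetricNodes, Option.elim_none,
    Option.elim_some, Sum.elim_inl, Sum.elim_inr, Pi.neg_apply, neg_inj] at h
  all_goals grind [Function.Injective]

theorem nodal_symmetricNodes [Fintype ι] :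
    nodal univ (symmetricNodes a) = X * nodal univ a * nodal univ (-a) := by
  simp [nodal, symmetricNodes, Fintype.prod_option, Fintype.prod_sum_type, mul_assoc]

theorem nodal_symmetricNodes_comp_neg_X [Fintype ι] :
    (nodal univ (symmetricNodes a)).comp (-X) = -nodal univ (symmetricNodes a) := by
  have hsq : nodal univ a * nodal univ (-a) = ∏ k, (X ^ 2 - C (a k ^ 2)) := by
    rw [nodal, nodal, ← prod_mul_distrib]
    refine prod_congr rfl fun k _ => ?_
    simp only [Pi.neg_apply, map_neg, map_pow]
    ring
  rw [nodal_symmetricNodes, mul_assoc, hsq, mul_comp, Polynomial.prod_comp]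
  simp

theorem inv_prod_neg_sq_add_two_mul_sum_inv_eq_zero [Fintype ι] [DecidableEq ι] [Nonempty ι]
    (ha : Function.Injective a) (hadd : ∀ k n, a k + a n ≠ 0) :
    (∏ k, -a k ^ 2)⁻¹ +
      2 * ∑ k, (a k * ((∏ n ∈ univ.erase k, (a k - a n)) * ∏ n, (a k + a n)))⁻¹ = 0 := by
  have hcard : 2 ≤ #(univ : Finset (Option (ι ⊕ ι))) := by
    simp [Fintype.card_sum, Nat.one_le_iff_ne_zero]
  have hsum := sum_inv_eval_derivative_nodal_eq_zero
    (symmetricNodes_injective ha hadd).injOn hcard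
  have hzero : eval 0 (derivative (nodal univ (symmetricNodes a))) = ∏ k, -a k ^ 2 := by
    rw [nodal_symmetricNodes]
    simp [derivative_mul, eval_nodal, ← prod_mul_distrib, sq]
  have hnode : ∀ k, eval (a k) (derivative (nodal univ (symmetricNodes a))) =
      a k * ((∏ n ∈ univ.erase k, (a k - a n)) * ∏ n, (a k + a n)) := by
    intro k
    rw [nodal_symmetricNodes, eval_derivative_X_mul_mul_of_eval_eq_zero
      (eval_nodal_at_node (mem_univ k)), eval_nodal_derivative_eval_node_eq (mem_univ k),
      eval_nodal, eval_nodal]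
    simp [mul_assoc]
  have hneg : ∀ k, eval (-a k) (derivative (nodal univ (symmetricNodes a))) =
      eval (a k) (derivative (nodal univ (symmetricNodes a))) := fun k =>
    eval_neg_derivative_of_comp_neg_X nodal_symmetricNodes_comp_neg_X (a k)
  simp only [Fintype.sum_option, Fintype.sum_sum_type, symmetricNodes, Option.elim_none,
    Option.elim_some, Sum.elim_inl, Sum.elim_inr, Pi.neg_apply, hzero, hneg, hnode] at hsum
  linear_combination hsum

end SymmetricNodes

/-- For distinct positive `η₁, ..., η_N` (`N ≥ 1`) and
`D_k = ∏_{n≠k}(2iη_k − 2iη_n)·∏_{n=1}^N(2iη_k + 2iη_n)`, one has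
`1/∏_n(4η_n²) + 2·Σ_k 1/(2iη_k·D_k) = 0`. -/
theorem residue_sum_identity_at_zero
    (N : ℕ) (hN : 1 ≤ N) (η : Fin N → ℝ)
    (hpos : ∀ k, 0 < η k) (hdist : Function.Injective η)
    (D : Fin N → ℂ)
    (hD : ∀ k, D k =
      (∏ n ∈ Finset.univ.erase k,
          (2 * Complex.I * (η k : ℂ) - 2 * Complex.I * (η n : ℂ))) *
        ∏ n : Fin N, (2 * Complex.I * (η k : ℂ) + 2 * Complex.I * (η n : ℂ)))
    :
    (1 : ℂ) / (∏ n : Fin N, (4 * (η n : ℂ) ^ 2)) +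
      2 * ∑ k : Fin N, 1 / (2 * Complex.I * (η k : ℂ) * D k) = 0 := by
  have : Nonempty (Fin N) := ⟨⟨0, hN⟩⟩
  have ha : Function.Injective fun k => 2 * I * (η k : ℂ) := fun k n h =>
    hdist (by simpa [I_ne_zero] using h)
  have hadd : ∀ k n, 2 * I * (η k : ℂ) + 2 * I * (η n : ℂ) ≠ 0 := fun k n => by
    rw [← mul_add]
    exact mul_ne_zero (by simp [I_ne_zero]) (by exact_mod_cast (add_pos (hpos k) (hpos n)).ne')
  have hsq : ∀ k, -(2 * I * (η k : ℂ)) ^ 2 = 4 * (η k : ℂ) ^ 2 := fun k => by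
    rw [mul_pow, mul_pow, I_sq]
    ring
  have key := inv_prod_neg_sq_add_two_mul_sum_inv_eq_zero ha hadd
  simp only [hsq] at key
  simpa only [one_div, hD, mul_assoc] using key
end

section
/- Assume the Kay–Moses setup: N ≥ 1, η₁ > ... > η_N > 0, α₁, ..., α_N ∈ ℝ, t ∈ ℝ fixed, and C¹ functions f₀, ..., f_{N−1} : ℝ → ℂ such that f₊(x,λ) := (1 + Σ_{n=0}^{N−1} λ^{n−N} f_n(x))·exp(−(i/2)(λx + λ³t)) satisfies f₊(x, 2iη_n) = (−1)^{n+1}·exp(2η_nα_n)·f₊(x, −2iη_n) for all x ∈ ℝ and n = 1, ..., N. Set f₋(x,λ) := f₊(x,−λ), g_±(x,λ) := f_±(x,λ)·exp((i/2)(λx + λ³t)), h₋(x,λ) := ∂_x g₋(x,λ), and define Y(x,z,λ) := g₊(z,λ)·exp(−i(λz + λ³t))·h₋(x,λ) / (λ^{1−2N}·∏_{n=1}^{N}(λ² + 4η_n²)). Then for all x, w ∈ ℝ and all R > 2η₁, the contour integral of λ ↦ Y(x,w,λ) over the positively oriented circle |λ| = R vanishes: ∮_{|λ|=R} Y(x,w,λ)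 dλ = 0. -/
/-!
Substituting the ansatz, for `λ ≠ 0` one gets `Y(x, w, λ) = (-1)^N Φ(λ) / P(λ)`, where
`P(λ) = λ ∏ₙ (λ² + 4ηₙ²)` has the simple zeros `0, ±2iηₙ` and
`Φ(λ) = A_w(λ) e^{-iλw} ∂ₓ[A_x(-λ) e^{iλx}]` is entire, `A_x(λ) = λ^N + Σₙ fₙ(x) λⁿ` being the
numerator of `f₊`. By partial fractions and Cauchy's formula the integral is
`2πi (-1)^N Σ_μ Φ(μ) / P'(μ)`, the sum running over the zeros of `P`. The relations between
`f₊(·, 2iηₙ)` and `f₊(·, -2iηₙ)` say `A_x(μ) = κ A_x(-μ) e^{iμx}` for all `x` at `μ = 2iηₙ`, and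
this forces `Φ(±μ) = Ψ(±μ)` for the polynomial `Ψ(λ) = A_w(-λ) ∂ₓA_x(λ)`, of degree
`< 2N = deg P - 1`. Finally `Σ_μ Ψ(μ) / P'(μ)` is the coefficient of `λ^{deg P - 1}` in the
Lagrange interpolant of `Ψ` on the zeros of `P`, which is `Ψ` itself, so the sum vanishes.
-/

open Complex Finset Polynomial Lagrange Metric

theorem Lagrange.inv_eval_nodal_eq_sum {F ι : Type*} [Field F] [DecidableEq ι] {s : Finset ι}
    {v : ι → F} (hvs : Set.InjOn v s) (hs : s.Nonempty) {x : F} (hx : ∀ i ∈ s, x ≠ v i) :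
    ((nodal s v).eval x)⁻¹ = ∑ i ∈ s, nodalWeight s v i * (x - v i)⁻¹ := by
  have h := eval_interpolate_not_at_node 1 hx
  simp only [interpolate_one hvs hs, eval_one, Pi.one_apply, mul_one] at h
  exact (eq_inv_of_mul_eq_one_right h.symm).symm

theorem circleIntegral_div_eval_nodal {ι : Type*} [DecidableEq ι] {s : Finset ι} {v : ι → ℂ}
    (hvs : Set.InjOn v s) (hs : s.Nonempty) {c : ℂ} {R : ℝ} (hv : ∀ i ∈ s, v i ∈ ball c R)
    {G : ℂ → ℂ} (hG : Differentiable ℂ G) :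
    (∮ z in C(c, R), G z / (nodal s v).eval z) =
      2 * Real.pi * I * ∑ i ∈ s, nodalWeight s v i * G (v i) := by
  obtain ⟨j, hj⟩ := hs
  have hR : 0 ≤ R := dist_nonneg.trans (mem_ball.mp (hv j hj)).le
  have hoff : ∀ z ∈ sphere c R, ∀ i ∈ s, z ≠ v i := fun z hz i hi h =>
    (mem_ball.mp (hv i hi)).ne (by rw [← h, mem_sphere.mp hz])
  calc (∮ z in C(c, R), G z / (nodal s v).eval z)
      = ∮ z in C(c, R), ∑ i ∈ s, nodalWeight s v i * (G z / (z - v i)) := by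
        refine circleIntegral.integral_congr hR fun z hz => ?_
        simp only [div_eq_mul_inv, inv_eval_nodal_eq_sum hvs ⟨j, hj⟩ (hoff z hz), mul_sum]
        exact sum_congr rfl fun i _ => by ring
    _ = ∑ i ∈ s, nodalWeight s v i * ∮ z in C(c, R), G z / (z - v i) := by
        have hint : ∀ i ∈ s,
            CircleIntegrable (fun z => nodalWeight s v i * (G z / (z - v i))) c R :=
          fun i hi => ContinuousOn.circleIntegrable hR <| continuousOn_const.mul <|
            hG.continuous.continuousOn.div (by fun_prop) fun z hz =>
              sub_ne_zero.mpr (hoff z hz i hi)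
        simp only [circleIntegral.integral_fun_sum hint, circleIntegral.integral_const_mul]
    _ = 2 * Real.pi * I * ∑ i ∈ s, nodalWeight s v i * G (v i) := by
        rw [mul_sum]
        refine sum_congr rfl fun i hi => ?_
        rw [circleIntegral_div_sub_of_differentiable_on_off_countable Set.countable_empty (hv i hi)
          hG.continuous.continuousOn fun z _ => hG z]
        ring

theorem circleIntegral_div_eval_nodal_eq_zero {ι : Type*} [DecidableEq ι] {s : Finset ι}
    {v : ι → ℂ} (hvs : Set.InjOn v s) (hs : s.Nonempty) {c : ℂ} {R : ℝ}
    (hv : ∀ i ∈ s, v i ∈ ball c R) {G : ℂ → ℂ} (hG : Differentiable ℂ G) {p : ℂ[X]}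
    (hp : p.degree < ↑(#s - 1)) (hGp : ∀ i ∈ s, G (v i) = p.eval (v i)) :
    (∮ z in C(c, R), G z / (nodal s v).eval z) = 0 := by
  have hcoeff := coeff_eq_sum hvs (hp.trans_le (by exact_mod_cast Nat.sub_le _ _))
  rw [coeff_eq_zero_of_degree_lt hp] at hcoeff
  rw [circleIntegral_div_eval_nodal hvs hs hv hG, mul_eq_zero, hcoeff]
  refine .inr (sum_congr rfl fun i hi => ?_)
  rw [hGp i hi, nodalWeight, prod_inv_distrib, div_eq_inv_mul]

section FinPoly

variable {R : Type*} [Semiring R] {N : ℕ}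

noncomputable def finPoly (c : Fin N → R) : R[X] := ∑ n : Fin N, C (c n) * X ^ (n : ℕ)

@[simp]
theorem eval_finPoly (c : Fin N → R) (z : R) :
    (finPoly c).eval z = ∑ n : Fin N, c n * z ^ (n : ℕ) := by
  simp [finPoly, eval_finsetSum]

theorem degree_finPoly_lt (c : Fin N → R) : (finPoly c).degree < N :=
  degree_sum_fin_lt c

end FinPoly

theorem degree_comp_neg_X_mul_finPoly_lt {R : Type*} [Ring R] [NoZeroDivisors R] {N : ℕ} {p : R[X]}
    (hp : p.degree ≤ N) (c : Fin N → R) :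
    (p.comp (-X) * finPoly c).degree < ↑(2 * N) := by
  rw [degree_mul, degree_comp_neg_X, two_mul, Nat.cast_add]
  exact (add_le_add_left hp _).trans_lt
    (WithBot.add_lt_add_left (WithBot.coe_ne_bot) (degree_finPoly_lt c))

namespace KayMoses

variable {N : ℕ}

/-- `A_y(λ) = λ^N + Σₙ fₙ(y) λⁿ`, so that `f₊(y, λ) = λ^{-N} A_y(λ) e^{-(i/2)(λy + λ³t)}`. -/
noncomputable def ansatzPoly (f : Fin N → ℝ → ℂ) (y : ℝ) : ℂ[X] := X ^ N + finPoly fun n => f n y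

theorem degree_ansatzPoly_le (f : Fin N → ℝ → ℂ) (y : ℝ) : (ansatzPoly f y).degree ≤ N :=
  degree_add_le_of_degree_le (degree_X_pow_le N) (degree_finPoly_lt _).le

theorem one_add_sum_zpow_mul_eq_eval_div (f : Fin N → ℝ → ℂ) (y : ℝ) {z : ℂ} (hz : z ≠ 0) :
    1 + ∑ n : Fin N, z ^ ((n : ℤ) - N) * f n y = (ansatzPoly f y).eval z / z ^ N := by
  simp only [ansatzPoly, eval_add, eval_pow, eval_X, eval_finPoly, add_div, sum_div,
    div_self (pow_ne_zero N hz), zpow_sub₀ hz, zpow_natCast]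
  exact congrArg _ (sum_congr rfl fun n _ => by ring)

theorem hasDerivAt_eval_ansatzPoly {f : Fin N → ℝ → ℂ} {x : ℝ}
    (hf : ∀ n, DifferentiableAt ℝ (f n) x) (z : ℂ) :
    HasDerivAt (fun y => (ansatzPoly f y).eval z) ((finPoly fun n => deriv (f n) x).eval z) x := by
  simp only [ansatzPoly, eval_add, eval_pow, eval_X, eval_finPoly]
  exact (HasDerivAt.fun_sum fun n _ => (hf n).hasDerivAt.mul_const _).const_add _

theorem deriv_eval_ansatzPoly_mul_exp {f : Fin N → ℝ → ℂ} {x : ℝ}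
    (hf : ∀ n, DifferentiableAt ℝ (f n) x) (z c : ℂ) :
    deriv (fun y : ℝ => (ansatzPoly f y).eval z * exp (I * c * y)) x =
      ((finPoly fun n => deriv (f n) x).eval z + I * c * (ansatzPoly f x).eval z) *
        exp (I * c * x) := by
  have hexp : HasDerivAt (fun y : ℝ => exp (I * c * y)) (exp (I * c * x) * (I * c)) x := by
    simpa using ((hasDerivAt_id x).ofReal_comp.const_mul (I * c)).cexp
  rw [((hasDerivAt_eval_ansatzPoly hf z).fun_mul hexp).deriv]
  ring

theorem exists_degree_lt_eval_eq_mul_deriv {f : Fin N → ℝ → ℂ} {x : ℝ}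
    (hf : ∀ n, DifferentiableAt ℝ (f n) x) (w : ℝ) :
    ∃ p : ℂ[X], p.degree < ↑(2 * N) ∧
      ∀ z, p.eval z = (ansatzPoly f w).eval (-z) * deriv (fun y => (ansatzPoly f y).eval z) x :=
  ⟨(ansatzPoly f w).comp (-X) * finPoly fun n => deriv (f n) x,
    degree_comp_neg_X_mul_finPoly_lt (degree_ansatzPoly_le f w) _,
    fun z => by simp [(hasDerivAt_eval_ansatzPoly hf z).deriv]⟩

theorem differentiable_mul_deriv_eval_ansatzPoly_mul_exp {f : Fin N → ℝ → ℂ} {x : ℝ}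
    (hf : ∀ n, DifferentiableAt ℝ (f n) x) (w : ℝ) :
    Differentiable ℂ fun z => (ansatzPoly f w).eval z * exp (-(I * z * w)) *
      deriv (fun y : ℝ => (ansatzPoly f y).eval (-z) * exp (I * z * y)) x := by
  simp only [deriv_eval_ansatzPoly_mul_exp hf]
  fun_prop

theorem numerator_reflection {a fplus : ℝ → ℂ → ℂ} {t : ℝ}
    (hfplus : ∀ y z, z ≠ 0 → fplus y z = a y z / z ^ N * exp (-(I / 2) * (z * y + z ^ 3 * t)))
    {μ e : ℂ} (hμ : μ ≠ 0) (hrel : ∀ y, fplus y μ = e * fplus y (-μ)) (y : ℝ) :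
    a y μ = e * (-1) ^ N * exp (I * μ ^ 3 * t) * a y (-μ) * exp (I * μ * y) := by
  have h := hrel y
  have hE : exp (-(I / 2) * (-μ * y + (-μ) ^ 3 * t)) =
      exp (-(I / 2) * (μ * y + μ ^ 3 * t)) * (exp (I * μ ^ 3 * t) * exp (I * μ * y)) := by
    rw [← exp_add, ← exp_add]; ring_nf
  have hsign : ((-1 : ℂ) ^ N) ^ 2 = 1 := by rw [← pow_mul, pow_mul', neg_one_sq, one_pow]
  rw [hfplus y μ hμ, hfplus y (-μ) (neg_ne_zero.mpr hμ), neg_pow, hE] at h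
  field_simp at h
  linear_combination (-1) ^ N * h - a y μ * hsign

/-- The identity `Φ(±μ) = Ψ(±μ)` of the header, for `a y λ = A_y(λ)`. Both sides are multiples
of the same `x`-derivative, so no differentiability is needed. -/
theorem reflected_deriv_eq {a : ℝ → ℂ → ℂ} {μ κ : ℂ}
    (h : ∀ y, a y μ = κ * a y (-μ) * exp (I * μ * y)) (x w : ℝ) {z : ℂ} (hz : z = μ ∨ z = -μ) :
    a w z * exp (-(I * z * w)) * deriv (fun y : ℝ => a y (-z) * exp (I * z * y)) x =
      a w (-z) * deriv (fun y => a y z) x := by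
  rcases hz with rfl | rfl
  · have : (fun y => a y z) = fun y => κ * (a y (-z) * exp (I * z * y)) :=
      funext fun y => by rw [h]; ring
    have hexp : exp (I * z * w) * exp (-(I * z * w)) = 1 := by
      rw [← exp_add, add_neg_cancel, exp_zero]
    rw [this, deriv_const_mul_field, h]
    linear_combination (κ * a w (-z) * deriv (fun y : ℝ => a y (-z) * exp (I * z * y)) x) * hexp
  · have : (fun y => a y (-(-μ)) * exp (I * -μ * y)) = fun y => κ * a y (-μ) :=
      funext fun y => by
        rw [neg_neg, h, mul_assoc, ← exp_add]
        simp
    rw [this, deriv_const_mul_field, neg_neg, h, show -(I * -μ * w) = I * μ * w by ring]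
    ring

def poles (η : Fin N → ℝ) : Option (Fin N ⊕ Fin N) → ℂ
  | none => 0
  | some (.inl n) => 2 * I * η n
  | some (.inr n) => -(2 * I * η n)

theorem poles_injective {η : Fin N → ℝ} (hη : Function.Injective η)
    (hpos : ∀ n, 0 < η n) : Function.Injective (poles η) := by
  have h2I : (2 * I : ℂ) ≠ 0 := mul_ne_zero two_ne_zero I_ne_zero
  have hne : ∀ n, (2 * I * η n : ℂ) ≠ 0 := fun n =>
    mul_ne_zero h2I (ofReal_ne_zero.mpr (hpos n).ne')
  have hsum : ∀ m n, (2 * I * η m : ℂ) ≠ -(2 * I * η n) := fun m n h => by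
    have : (η m + η n : ℂ) = 0 := by
      refine (mul_eq_zero.mp ?_).resolve_left h2I
      linear_combination h
    exact (add_pos (hpos m) (hpos n)).ne' (by exact_mod_cast this)
  have hinj : ∀ m n, (2 * I * η m : ℂ) = 2 * I * η n → m = n := fun m n h =>
    hη (by exact_mod_cast mul_left_cancel₀ h2I h)
  rintro (_ | m | m) (_ | n | n) h <;> simp only [poles] at h
  · rfl
  · exact (hne n h.symm).elim
  · exact (hne n (neg_eq_zero.mp h.symm)).elim
  · exact (hne m h).elim
  · rw [hinj m n h]
  · exact (hsum m n h).elim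
  · exact (hne m (neg_eq_zero.mp h)).elim
  · exact (hsum n m h.symm).elim
  · rw [hinj m n (neg_inj.mp h)]

theorem eval_nodal_poles (η : Fin N → ℝ) (z : ℂ) :
    (nodal univ (poles η)).eval z = z * ∏ n, (z ^ 2 + 4 * (η n : ℂ) ^ 2) := by
  simp only [eval_nodal, Fintype.prod_option, Fintype.prod_sum_type, poles, sub_zero,
    ← prod_mul_distrib]
  congr 1
  refine prod_congr rfl fun n _ => ?_
  linear_combination (-4 * (η n : ℂ) ^ 2) * I_sq

theorem norm_poles_lt {η : Fin N → ℝ} (hN : 0 < N) (hpos : ∀ n, 0 < η n)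
    (hη : Antitone η) {R : ℝ} (hR : 2 * η ⟨0, hN⟩ < R) (i : Option (Fin N ⊕ Fin N)) :
    ‖poles η i‖ < R := by
  have hmax : ∀ n, 2 * η n < R := fun n =>
    lt_of_le_of_lt (by gcongr; exact hη (Nat.zero_le n)) hR
  rcases i with _ | n | n
  · simpa [poles] using (mul_pos two_pos (hpos ⟨0, hN⟩)).trans hR
  all_goals simpa [poles, abs_of_pos (hpos n)] using hmax n

theorem reflected_deriv_eq_at_poles {a fplus : ℝ → ℂ → ℂ} {t : ℝ} {η : Fin N → ℝ}
    {e : Fin N → ℂ}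
    (hfplus : ∀ y z, z ≠ 0 → fplus y z = a y z / z ^ N * exp (-(I / 2) * (z * y + z ^ 3 * t)))
    (hη : ∀ n, η n ≠ 0) (hrel : ∀ y n, fplus y (2 * I * η n) = e n * fplus y (-(2 * I * η n)))
    (x w : ℝ) (i : Option (Fin N ⊕ Fin N)) :
    a w (poles η i) * exp (-(I * poles η i * w)) *
        deriv (fun y : ℝ => a y (-poles η i) * exp (I * poles η i * y)) x =
      a w (-poles η i) * deriv (fun y => a y (poles η i)) x := by
  rcases i with _ | n | n
  · simp [poles]
  all_goals
    have hμ : (2 * I * η n : ℂ) ≠ 0 := by simp [I_ne_zero, hη n]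
    refine reflected_deriv_eq (numerator_reflection hfplus hμ (hrel · n)) x w ?_
    simp [poles]

theorem integrand_eq {a fplus gplus gminus hminus : ℝ → ℂ → ℂ} {Y : ℝ → ℝ → ℂ → ℂ}
    {t : ℝ} {η : Fin N → ℝ}
    (hfplus : ∀ y z, z ≠ 0 → fplus y z = a y z / z ^ N * exp (-(I / 2) * (z * y + z ^ 3 * t)))
    (hgplus : ∀ (x : ℝ) (lam : ℂ), gplus x lam =
      fplus x lam * exp ((I / 2) * (lam * x + lam ^ 3 * t)))
    (hgminus : ∀ (x : ℝ) (lam : ℂ), gminus x lam =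
      fplus x (-lam) * exp ((I / 2) * (lam * x + lam ^ 3 * t)))
    (hhminus : ∀ (x : ℝ) (lam : ℂ), hminus x lam = deriv (fun y => gminus y lam) x)
    (hY : ∀ (x z : ℝ) (lam : ℂ), Y x z lam =
      gplus z lam * exp (-I * (lam * z + lam ^ 3 * t)) * hminus x lam /
        (lam ^ (1 - 2 * (N : ℤ)) * ∏ n : Fin N, (lam ^ 2 + 4 * (η n : ℂ) ^ 2)))
    (x w : ℝ) {z : ℂ} (hz : z ≠ 0) :
    Y x w z = (-1) ^ N * (a w z * exp (-(I * z * w)) *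
      deriv (fun y : ℝ => a y (-z) * exp (I * z * y)) x) /
        (z * ∏ n : Fin N, (z ^ 2 + 4 * (η n : ℂ) ^ 2)) := by
  have hgplus' : gplus w z = a w z / z ^ N := by
    rw [hgplus, hfplus w z hz, mul_assoc, ← exp_add,
      show -(I / 2) * (z * w + z ^ 3 * t) + I / 2 * (z * w + z ^ 3 * t) = 0 by ring, exp_zero,
      mul_one]
  have hgminus' : (fun y => gminus y z) =
      fun y : ℝ => ((-z) ^ N)⁻¹ * exp (I * z ^ 3 * t) * (a y (-z) * exp (I * z * y)) := by
    funext y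
    have hE : exp (-(I / 2) * (-z * y + (-z) ^ 3 * t)) * exp (I / 2 * (z * y + z ^ 3 * t)) =
        exp (I * z ^ 3 * t) * exp (I * z * y) := by
      rw [← exp_add, ← exp_add]; ring_nf
    rw [hgminus, hfplus y (-z) (neg_ne_zero.mpr hz)]
    linear_combination (a y (-z) / (-z) ^ N) * hE
  have hE : exp (-I * (z * w + z ^ 3 * t)) * exp (I * z ^ 3 * t) = exp (-(I * z * w)) := by
    rw [← exp_add]; ring_nf
  have hzpow : z ^ (1 - 2 * (N : ℤ)) = z / (z ^ N) ^ 2 := by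
    rw [zpow_sub₀ hz, zpow_one, mul_comm, zpow_mul, zpow_natCast, zpow_ofNat, ← pow_mul]
  have hsign : ((-1 : ℂ) ^ N) ^ 2 = 1 := by rw [← pow_mul, pow_mul', neg_one_sq, one_pow]
  rw [hY, hgplus', hhminus, hgminus', deriv_const_mul_field, div_mul_eq_div_div,
    div_mul_eq_div_div, hzpow, neg_pow]
  congr 1
  rw [← hE]
  generalize exp (-I * (z * w + z ^ 3 * t)) = E₁
  generalize exp (I * z ^ 3 * t) = E₂
  generalize deriv (fun y : ℝ => a y (-z) * exp (I * z * y)) x = D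
  field_simp
  linear_combination -(a w z * E₁ * E₂ * D) * hsign

end KayMoses

open KayMoses

/-- In the Kay–Moses setup, the meromorphic integrand
`Y(x,w,λ)` has vanishing contour integral over any circle `|λ| = R` with
`R > 2η₁` (i.e. the sum of all its residues is zero). -/
theorem kay_moses_Y_circle_integral_vanishes
    (N : ℕ) (hN : 0 < N) (η : Fin N → ℝ) (α : Fin N → ℝ) (t : ℝ)
    (hpos : ∀ n, 0 < η n)
    (hdec : ∀ m n : Fin N, m < n → η n < η m)
    (f : Fin N → ℝ → ℂ) (hf : ∀ n, ContDiff ℝ 1 (f n))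
    (fplus : ℝ → ℂ → ℂ)
    (hfplus : ∀ (x : ℝ) (lam : ℂ), fplus x lam =
      (1 + ∑ n : Fin N, lam ^ (((n : ℕ) : ℤ) - (N : ℤ)) * f n x) *
        Complex.exp (-(Complex.I / 2) * (lam * (x : ℂ) + lam ^ 3 * (t : ℂ))))
    (hrel : ∀ (x : ℝ) (n : Fin N),
      fplus x (2 * Complex.I * (η n : ℂ)) =
        (-1 : ℂ) ^ (n : ℕ) * (Real.exp (2 * η n * α n) : ℂ) *
          fplus x (-(2 * Complex.I * (η n : ℂ))))
    (gplus gminus : ℝ → ℂ → ℂ)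
    (hgplus : ∀ (x : ℝ) (lam : ℂ), gplus x lam =
      fplus x lam * Complex.exp ((Complex.I / 2) * (lam * (x : ℂ) + lam ^ 3 * (t : ℂ))))
    (hgminus : ∀ (x : ℝ) (lam : ℂ), gminus x lam =
      fplus x (-lam) * Complex.exp ((Complex.I / 2) * (lam * (x : ℂ) + lam ^ 3 * (t : ℂ))))
    (hminus : ℝ → ℂ → ℂ)
    (hhminus : ∀ (x : ℝ) (lam : ℂ), hminus x lam = deriv (fun y => gminus y lam) x)
    (Y : ℝ → ℝ → ℂ → ℂ)
    (hY : ∀ (x z : ℝ) (lam : ℂ), Y x z lam =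
      gplus z lam * Complex.exp (-Complex.I * (lam * (z : ℂ) + lam ^ 3 * (t : ℂ))) *
        hminus x lam /
        (lam ^ (1 - 2 * (N : ℤ)) * ∏ n : Fin N, (lam ^ 2 + 4 * (η n : ℂ) ^ 2)))
    (x w : ℝ) (R : ℝ) (hR : 2 * η ⟨0, hN⟩ < R) :
    (∮ lam in C(0, R), Y x w lam) = 0 := by
  have hη : StrictAnti η := fun m n h => hdec m n h
  have hdf : ∀ n, DifferentiableAt ℝ (f n) x := fun n => (hf n).differentiable one_ne_zero x
  set a : ℝ → ℂ → ℂ := fun y z => (ansatzPoly f y).eval z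
  have hfplus' : ∀ y z, z ≠ 0 → fplus y z = a y z / z ^ N * exp (-(I / 2) * (z * y + z ^ 3 * t)) :=
    fun y z hz => by rw [hfplus, one_add_sum_zpow_mul_eq_eval_div f y hz]
  obtain ⟨Q, hQ, hQeval⟩ := exists_degree_lt_eval_eq_mul_deriv hdf w
  have hR0 : 0 < R := (mul_pos two_pos (hpos ⟨0, hN⟩)).trans hR
  calc (∮ lam in C(0, R), Y x w lam)
      = ∮ z in C(0, R), (-1) ^ N * ((a w z * exp (-(I * z * w)) *
          deriv (fun y : ℝ => a y (-z) * exp (I * z * y)) x) / (nodal univ (poles η)).eval z) :=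
        circleIntegral.integral_congr hR0.le fun z hz => by
          rw [integrand_eq hfplus' hgplus hgminus hhminus hY x w (ne_of_mem_sphere hz hR0.ne'),
            eval_nodal_poles, mul_div_assoc]
    _ = 0 := by
      rw [circleIntegral.integral_const_mul, mul_eq_zero]
      refine .inr (circleIntegral_div_eval_nodal_eq_zero (poles_injective hη.injective hpos).injOn
        univ_nonempty (fun i _ => mem_ball_zero_iff.mpr (norm_poles_lt hN hpos hη.antitone hR i))
        (differentiable_mul_deriv_eval_ansatzPoly_mul_exp hdf w) (by simpa [two_mul] using hQ)
        fun i _ => ?_)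
      rw [reflected_deriv_eq_at_poles hfplus' (fun n => (hpos n).ne') hrel, hQeval]
end

section
/- Assume the Kay–Moses setup: N ≥ 1, η₁ > ... > η_N > 0, α₁, ..., α_N ∈ ℝ, t ∈ ℝ fixed, and C¹ functions f₀, ..., f_{N−1} : ℝ → ℂ such that f₊(x,λ) := (1 + Σ_{n=0}^{N−1} λ^{n−N} f_n(x))·exp(−(i/2)(λx + λ³t)) satisfies f₊(x, 2iη_n) = (−1)^{n+1}·exp(2η_nα_n)·f₊(x, −2iη_n) for all x ∈ ℝ and n = 1, ..., N. Set f₋(x,λ) := f₊(x,−λ), g₋(x,λ) := f₋(x,λ)·exp((i/2)(λx + λ³t)), h₋(x,λ) := ∂_x g₋(x,λ), and H(x,λ) := λ^N·h₋(x,λ). Then for every x ∈ ℝ, H(x,0) = Σ_{n=1}^{N} [(−1)^n·exp(2η_nα_n)·∏_{k≠n} η_k/(η_n − η_k)]·H(x, 2iη_n). -/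
open Complex Finset Polynomial

/-!
Multiplying `h₋(x,λ)` by `λ^N` clears the negative powers of the Kay–Moses ansatz: away from
`λ = 0`, `H(x,λ)` is `(-1)^N P(-λ) e^{iλx + iλ³t}` plus a multiple of `λ`, where
`P(z) = Σₙ fₙ'(x) zⁿ` is a polynomial of degree `< N`; by continuity `H(x,0) = (-1)^N P(0)`.
At `λ = 2iηₙ` the reflection relation makes `g₋` a constant multiple of `1 + Σ λ^{m-N} f_m`, so the
exponential disappears and `H(x,2iηₙ)` is a known multiple of `P(2iηₙ)`. Lagrange interpolation of
`P` at the `N` distinct nodes `2iηₙ` expresses `P(0)` through these values.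
-/

theorem Lagrange.eval_eq_sum_eval_mul_prod {F ι : Type*} [Field F] [DecidableEq ι]
    {s : Finset ι} {v : ι → F} (hvs : Set.InjOn v s) {p : F[X]} (hp : p.degree < #s) (y : F) :
    p.eval y = ∑ i ∈ s, p.eval (v i) * ∏ j ∈ s.erase i, (y - v j) / (v i - v j) := by
  conv_lhs => rw [Lagrange.eq_interpolate hvs hp]
  simp only [Lagrange.interpolate_apply, eval_finsetSum, eval_mul, eval_C, Lagrange.basis,
    eval_prod, Lagrange.basisDivisor, eval_sub, eval_X, div_eq_inv_mul]

theorem prod_neg_mul_div_mul_sub_mul {K ι : Type*} [Field K] (s : Finset ι) (w : ι → K) {c : K}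
    (hc : c ≠ 0) (a : K) :
    ∏ k ∈ s, -(c * w k) / (c * a - c * w k) = (-1) ^ #s * ∏ k ∈ s, w k / (a - w k) := by
  rw [← prod_const, ← prod_mul_distrib]
  refine prod_congr rfl fun k _ => ?_
  rw [← mul_sub, neg_div, mul_div_mul_left _ _ hc, neg_one_mul]

theorem pow_mul_sum_zpow_sub {K : Type*} [Field K] {N : ℕ} (a : Fin N → K) {z : K} (hz : z ≠ 0) :
    z ^ N * ∑ n : Fin N, z ^ (((n : ℕ) : ℤ) - N) * a n =
      (∑ n : Fin N, C (a n) * X ^ (n : ℕ)).eval z := by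
  rw [mul_sum, eval_finsetSum]
  refine sum_congr rfl fun n _ => ?_
  rw [← mul_assoc, ← zpow_natCast, ← zpow_add₀ hz, add_sub_cancel, zpow_natCast, eval_mul, eval_C,
    eval_pow, eval_X, mul_comm]

section KayMoses

variable {N : ℕ} {f : Fin N → ℝ → ℂ} {x : ℝ}

noncomputable def laurentFactor (f : Fin N → ℝ → ℂ) (x : ℝ) (lam : ℂ) : ℂ :=
  1 + ∑ n : Fin N, lam ^ (((n : ℕ) : ℤ) - (N : ℤ)) * f n x

theorem hasDerivAt_laurentFactor (hf : ∀ n, DifferentiableAt ℝ (f n) x) (lam : ℂ) :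
    HasDerivAt (laurentFactor f · lam)
      (∑ n : Fin N, lam ^ (((n : ℕ) : ℤ) - (N : ℤ)) * deriv (f n) x) x :=
  (HasDerivAt.fun_sum fun n _ => (hf n).hasDerivAt.const_mul _).const_add 1

variable {t : ℝ} {fplus gminus : ℝ → ℂ → ℂ}

theorem gminus_eq_laurentFactor_mul_cexp
    (hfplus : ∀ (x : ℝ) (lam : ℂ),
      fplus x lam = laurentFactor f x lam * cexp (-(I / 2) * (lam * x + lam ^ 3 * t)))
    (hgminus : ∀ (x : ℝ) (lam : ℂ),
      gminus x lam = fplus x (-lam) * cexp ((I / 2) * (lam * x + lam ^ 3 * t)))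
    (x : ℝ) (lam : ℂ) :
    gminus x lam = laurentFactor f x (-lam) * cexp (I * (lam * x + lam ^ 3 * t)) := by
  rw [hgminus, hfplus, mul_assoc, ← Complex.exp_add]
  ring_nf

theorem gminus_eq_of_reflection
    (hfplus : ∀ (x : ℝ) (lam : ℂ),
      fplus x lam = laurentFactor f x lam * cexp (-(I / 2) * (lam * x + lam ^ 3 * t)))
    (hgminus : ∀ (x : ℝ) (lam : ℂ),
      gminus x lam = fplus x (-lam) * cexp ((I / 2) * (lam * x + lam ^ 3 * t)))
    {μ c : ℂ} (hc : c ≠ 0) (hrel : fplus x μ = c * fplus x (-μ)) :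
    gminus x μ = c⁻¹ * laurentFactor f x μ := by
  have hflip : fplus x (-μ) = c⁻¹ * fplus x μ := by rw [hrel, inv_mul_cancel_left₀ hc]
  rw [hgminus, hflip, hfplus, mul_assoc, mul_assoc, ← Complex.exp_add, neg_mul, neg_add_cancel,
    Complex.exp_zero, mul_one]

theorem pow_mul_deriv_eq_of_reflection (hf : ∀ n, DifferentiableAt ℝ (f n) x) {μ c : ℂ}
    (hμ : μ ≠ 0) {g : ℝ → ℂ} (hg : ∀ y, g y = c⁻¹ * laurentFactor f y μ) :
    μ ^ N * deriv g x = c⁻¹ * (∑ n : Fin N, C (deriv (f n) x) * X ^ (n : ℕ)).eval μ := by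
  rw [funext hg, ((hasDerivAt_laurentFactor hf μ).const_mul _).deriv, mul_left_comm,
    pow_mul_sum_zpow_sub _ hμ]

theorem eq_neg_one_pow_mul_eval_zero_of_continuous (hf : ∀ n, DifferentiableAt ℝ (f n) x)
    {h : ℂ → ℂ} (hcont : Continuous h)
    (hh : ∀ lam ≠ 0, h lam = lam ^ N *
      deriv (fun y : ℝ => laurentFactor f y (-lam) * cexp (I * (lam * y + lam ^ 3 * t))) x) :
    h 0 = (-1) ^ N * (∑ n : Fin N, C (deriv (f n) x) * X ^ (n : ℕ)).eval 0 := by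
  set P : ℂ[X] := ∑ n : Fin N, C (deriv (f n) x) * X ^ (n : ℕ)
  set R : ℂ[X] := ∑ n : Fin N, C (f n x) * X ^ (n : ℕ)
  suffices h = fun lam => (-1) ^ N * (P.eval (-lam) + I * lam * ((-lam) ^ N + R.eval (-lam))) *
      cexp (I * (lam * x + lam ^ 3 * t)) by simp [this]
  refine Continuous.ext_on (dense_compl_singleton 0) hcont (by fun_prop) fun lam hlam => ?_
  have hlam' : -lam ≠ 0 := neg_ne_zero.2 hlam
  have hphase : HasDerivAt (fun y : ℝ => cexp (I * (lam * y + lam ^ 3 * t)))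
      (cexp (I * (lam * x + lam ^ 3 * t)) * (I * lam)) x := by
    simpa using ((((hasDerivAt_id x).ofReal_comp.const_mul lam).add_const
      (lam ^ 3 * t)).const_mul I).cexp
  have hsign : lam ^ N = (-1) ^ N * (-lam) ^ N := by rw [← mul_pow, neg_one_mul, neg_neg]
  rw [hh lam hlam, ((hasDerivAt_laurentFactor hf (-lam)).fun_mul hphase).deriv, hsign, laurentFactor]
  linear_combination (-1) ^ N * cexp (I * (lam * x + lam ^ 3 * t)) *
    (pow_mul_sum_zpow_sub (fun n => deriv (f n) x) hlam' +
      I * lam * pow_mul_sum_zpow_sub (fun n => f n x) hlam')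

end KayMoses

theorem kay_moses_bound_state_interpolation_general
    (N : ℕ) (η : Fin N → ℝ) (α : Fin N → ℝ) (t : ℝ)
    (hpos : ∀ n, 0 < η n)
    (hdec : ∀ m n : Fin N, m < n → η n < η m)
    (f : Fin N → ℝ → ℂ) (hf : ∀ n, ContDiff ℝ 1 (f n))
    (fplus : ℝ → ℂ → ℂ)
    (hfplus : ∀ (x : ℝ) (lam : ℂ), fplus x lam =
      (1 + ∑ n : Fin N, lam ^ (((n : ℕ) : ℤ) - (N : ℤ)) * f n x) *
        Complex.exp (-(Complex.I / 2) * (lam * (x : ℂ) + lam ^ 3 * (t : ℂ))))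
    (hrel : ∀ (x : ℝ) (n : Fin N),
      fplus x (2 * Complex.I * (η n : ℂ)) =
        (-1 : ℂ) ^ (n : ℕ) * (Real.exp (2 * η n * α n) : ℂ) *
          fplus x (-(2 * Complex.I * (η n : ℂ))))
    (gminus : ℝ → ℂ → ℂ)
    (hgminus : ∀ (x : ℝ) (lam : ℂ), gminus x lam =
      fplus x (-lam) * Complex.exp ((Complex.I / 2) * (lam * (x : ℂ) + lam ^ 3 * (t : ℂ))))
    (hminus : ℝ → ℂ → ℂ)
    (hhminus : ∀ (x : ℝ) (lam : ℂ), hminus x lam = deriv (fun y => gminus y lam) x)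
    (H : ℝ → ℂ → ℂ)
    (hH : ∀ (x : ℝ) (lam : ℂ), lam ≠ 0 → H x lam = lam ^ (N : ℕ) * hminus x lam)
    (hHentire : ∀ x : ℝ, Differentiable ℂ (fun lam => H x lam)) :
    ∀ x : ℝ, H x 0 =
      ∑ n : Fin N,
        ((-1 : ℂ) ^ ((n : ℕ) + 1) * (Real.exp (2 * η n * α n) : ℂ) *
            ∏ k ∈ Finset.univ.erase n, ((η k : ℂ) / ((η n : ℂ) - (η k : ℂ)))) *
          H x (2 * Complex.I * (η n : ℂ)) := by
  intro x
  have hfx : ∀ n, DifferentiableAt ℝ (f n) x := fun n => (hf n).differentiable one_ne_zero x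
  set P : ℂ[X] := ∑ n : Fin N, C (deriv (f n) x) * X ^ (n : ℕ)
  have hzero : H x 0 = (-1) ^ N * P.eval 0 :=
    eq_neg_one_pow_mul_eval_zero_of_continuous hfx (hHentire x).continuous fun lam hlam => by
      rw [hH x lam hlam, hhminus, funext (gminus_eq_laurentFactor_mul_cexp hfplus hgminus · lam)]
  have h2I : (2 * I : ℂ) ≠ 0 := by simp
  have heig : ∀ n, P.eval (2 * I * η n) =
      (-1) ^ (n : ℕ) * (Real.exp (2 * η n * α n) : ℂ) * H x (2 * I * η n) := fun n => by
    have hc : (-1) ^ (n : ℕ) * (Real.exp (2 * η n * α n) : ℂ) ≠ 0 := by simp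
    have hμ : 2 * I * (η n : ℂ) ≠ 0 := mul_ne_zero h2I (by exact_mod_cast (hpos n).ne')
    rw [hH x _ hμ, hhminus, pow_mul_deriv_eq_of_reflection hfx hμ
      fun y => gminus_eq_of_reflection hfplus hgminus hc (hrel y n), mul_inv_cancel_left₀ hc]
  have hinj : Set.InjOn (fun n => 2 * I * (η n : ℂ)) (univ : Finset (Fin N)) :=
    fun m _ n _ hmn => (StrictAnti.injective fun _ _ => hdec _ _) (by simpa [h2I] using hmn)
  rw [hzero, Lagrange.eval_eq_sum_eval_mul_prod hinj (by simpa using degree_sum_fin_lt _) 0,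
    mul_sum]
  refine sum_congr rfl fun n _ => ?_
  simp_rw [zero_sub]
  rw [heig, prod_neg_mul_div_mul_sub_mul _ _ h2I]
  have hsign : (-1 : ℂ) ^ N * (-1) ^ #(univ.erase n) = -1 := by
    calc (-1 : ℂ) ^ N * (-1) ^ #(univ.erase n)
        = (-1) ^ (#(univ.erase n) + 1) * (-1) ^ #(univ.erase n) := by
          rw [card_erase_add_one (mem_univ n), card_fin]
      _ = -1 := by rw [pow_succ, mul_right_comm, ← mul_pow]; norm_num
  linear_combination (-1) ^ (n : ℕ) * (Real.exp (2 * η n * α n) : ℂ) *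
    (∏ k ∈ univ.erase n, (η k : ℂ) / (η n - η k)) * H x (2 * I * η n) * hsign

/-- In the Kay–Moses setup, the entire mode function
`H(x,λ) = λ^N·h₋(x,λ)` satisfies the Lagrange interpolation identity
`H(x,0) = Σ_n [(−1)^n·exp(2η_nα_n)·∏_{k≠n} η_k/(η_n−η_k)]·H(x,2iη_n)`
(with paper indexing `n = 1, ..., N`). -/
theorem kay_moses_bound_state_interpolation
    (N : ℕ) (hN : 0 < N) (η : Fin N → ℝ) (α : Fin N → ℝ) (t : ℝ)
    (hpos : ∀ n, 0 < η n)
    (hdec : ∀ m n : Fin N, m < n → η n < η m)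
    (f : Fin N → ℝ → ℂ) (hf : ∀ n, ContDiff ℝ 1 (f n))
    (fplus : ℝ → ℂ → ℂ)
    (hfplus : ∀ (x : ℝ) (lam : ℂ), fplus x lam =
      (1 + ∑ n : Fin N, lam ^ (((n : ℕ) : ℤ) - (N : ℤ)) * f n x) *
        Complex.exp (-(Complex.I / 2) * (lam * (x : ℂ) + lam ^ 3 * (t : ℂ))))
    (hrel : ∀ (x : ℝ) (n : Fin N),
      fplus x (2 * Complex.I * (η n : ℂ)) =
        (-1 : ℂ) ^ (n : ℕ) * (Real.exp (2 * η n * α n) : ℂ) *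
          fplus x (-(2 * Complex.I * (η n : ℂ))))
    (gminus : ℝ → ℂ → ℂ)
    (hgminus : ∀ (x : ℝ) (lam : ℂ), gminus x lam =
      fplus x (-lam) * Complex.exp ((Complex.I / 2) * (lam * (x : ℂ) + lam ^ 3 * (t : ℂ))))
    (hminus : ℝ → ℂ → ℂ)
    (hhminus : ∀ (x : ℝ) (lam : ℂ), hminus x lam = deriv (fun y => gminus y lam) x)
    (H : ℝ → ℂ → ℂ)
    (hH : ∀ (x : ℝ) (lam : ℂ), lam ≠ 0 → H x lam = lam ^ (N : ℕ) * hminus x lam)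
    (hHentire : ∀ x : ℝ, Differentiable ℂ (fun lam => H x lam)) :
    ∀ x : ℝ, H x 0 =
      ∑ n : Fin N,
        ((-1 : ℂ) ^ ((n : ℕ) + 1) * (Real.exp (2 * η n * α n) : ℂ) *
            ∏ k ∈ Finset.univ.erase n, ((η k : ℂ) / ((η n : ℂ) - (η k : ℂ)))) *
          H x (2 * Complex.I * (η n : ℂ)) :=
  kay_moses_bound_state_interpolation_general N η α t hpos hdec f hf fplus hfplus hrel gminus
    hgminus hminus hhminus H hH hHentire
end

section
/- Let η₁ > η₂ > 0. Define Q⁺₁ := −2iη₂, Q⁺₂ := 2iη₁, Q⁻₁ := 2iη₂, Q⁻₂ := −2iη₁ (so that Q⁻_m is the complex conjugate of Q⁺_m, and Q⁺₁, Q⁺₂ are respectively the unique solutions of (2iη₂)^{−1} + (2iη₂)^{−2}Q = 0 and (−2iη₁)^{−1} + (−2iη₁)^{−2}Q = 0). Define the 2×2 complex matrices G^± by G^±_{km} := −1/(12η_k) + (1/(6i))·(2iη_k)^{−2}·Q^±_m for k, m ∈ {1,2}. Then G⁻ is invertible and the bound state scattering matrix T := ((G⁻)^{−1}·G⁺)^T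 equals (1/(η₁² − η₂²))·[[(η₁−η₂)², 2η₂(η₁−η₂)], [2η₁(η₁−η₂), −(η₁−η₂)²]]. In particular T₂₂ < 0. -/
/-!
Writing `Q^±_m = 2i q^±_m`, every entry factors as `G^±_{km} = -(η_k + q^±_m) / (12 η_k²)`, i.e.
`G^± = D · M^±` with `D = diag(-1/(12 η_k²))` and `M^±_{km} = η_k + q^±_m`. The diagonal factor
cancels in `(G⁻)⁻¹ G⁺ = (M⁻)⁻¹ M⁺`, so it remains to check the `2 × 2` identity `M⁻ · Tᵀ = M⁺`.
-/

open Complex Matrix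

lemma bound_state_entry_eq {x : ℂ} (hx : x ≠ 0) (q : ℂ) :
    -1 / (12 * x) + 1 / (6 * I) * (2 * I * x) ^ (-2 : ℤ) * (2 * I * q) =
      -1 / (12 * x ^ 2) * (x + q) := by
  rw [_root_.zpow_neg, zpow_two]
  field_simp
  ring_nf
  rw [I_sq]
  ring

lemma eq_diagonal_mul_of_bound_state_entries {n : Type*} [Fintype n] [DecidableEq n]
    {G : Matrix n n ℂ} {η q Q : n → ℂ} (hη : ∀ k, η k ≠ 0) (hQ : ∀ m, Q m = 2 * I * q m)
    (hG : ∀ k m, G k m =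
      -1 / (12 * η k) + (1 / (6 * I)) * (2 * I * η k) ^ (-2 : ℤ) * Q m) :
    G = diagonal (fun k ↦ -1 / (12 * η k ^ 2)) * of (fun k m ↦ η k + q m) := by
  ext k m
  rw [hG, hQ, bound_state_entry_eq (hη k), diagonal_mul, of_apply]

lemma inv_mul_mul_cancel_left {n : Type*} [Fintype n] [DecidableEq n] {α : Type*} [CommRing α]
    (D A B : Matrix n n α) [Invertible D] : (D * A)⁻¹ * (D * B) = A⁻¹ * B := by
  rw [Matrix.mul_inv_rev, Matrix.mul_assoc, inv_mul_cancel_left_of_invertible]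

lemma det_two_soliton_minus (a b : ℂ) :
    (of fun k m ↦ ![a, b] k + ![b, -a] m).det = -((a + b) * (a - b)) := by
  rw [det_fin_two]; simp; ring

lemma two_soliton_inv_mul {a b : ℂ} (hs : a + b ≠ 0) (hd : a - b ≠ 0) :
    (of fun k m ↦ ![a, b] k + ![b, -a] m)⁻¹ * (of fun k m ↦ ![a, b] k + ![-b, a] m) =
      ((1 / (a ^ 2 - b ^ 2)) • !![(a - b) ^ 2, 2 * b * (a - b); 2 * a * (a - b), -((a - b) ^ 2)])ᵀ := by
  have hmul : (of fun k m ↦ ![a, b] k + ![b, -a] m) *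
      ((1 / (a ^ 2 - b ^ 2)) • !![(a - b) ^ 2, 2 * b * (a - b); 2 * a * (a - b), -((a - b) ^ 2)])ᵀ =
      (of fun k m ↦ ![a, b] k + ![-b, a] m) := by
    have hsq : a ^ 2 - b ^ 2 ≠ 0 := by
      rw [sq_sub_sq]; exact mul_ne_zero hs hd
    ext i j
    fin_cases i <;> fin_cases j <;> simp [mul_apply, Fin.sum_univ_two] <;> field_simp <;> ring
  rw [← hmul, ← Matrix.mul_assoc, nonsing_inv_mul _ (by simp [det_two_soliton_minus, hs, hd]),
    Matrix.one_mul]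

/-- Explicit bound state scattering matrix for `N = 2`.  With
`Q⁺ = (−2iη₂, 2iη₁)`, `Q⁻ = (2iη₂, −2iη₁)` and
`G^±_{km} = −1/(12η_k) + (1/(6i))(2iη_k)^{−2}Q^±_m`, the matrix `G⁻` is
invertible and `T = ((G⁻)⁻¹G⁺)ᵀ` equals
`(1/(η₁²−η₂²))·[[(η₁−η₂)², 2η₂(η₁−η₂)], [2η₁(η₁−η₂), −(η₁−η₂)²]]`;
in particular `T₂₂ < 0`. -/
theorem two_soliton_bound_state_scattering_matrix
    (η₁ η₂ : ℝ) (h₂ : 0 < η₂) (h₁₂ : η₂ < η₁)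
    (ηv : Fin 2 → ℝ) (hηv : ηv = ![η₁, η₂])
    (Qp Qm : Fin 2 → ℂ)
    (hQp : Qp = ![-(2 * Complex.I * (η₂ : ℂ)), 2 * Complex.I * (η₁ : ℂ)])
    (hQm : Qm = ![2 * Complex.I * (η₂ : ℂ), -(2 * Complex.I * (η₁ : ℂ))])
    (Gp Gm : Matrix (Fin 2) (Fin 2) ℂ)
    (hGp : ∀ k m : Fin 2, Gp k m =
      -1 / (12 * (ηv k : ℂ)) +
        (1 / (6 * Complex.I)) * (2 * Complex.I * (ηv k : ℂ)) ^ (-2 : ℤ) * Qp m)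
    (hGm : ∀ k m : Fin 2, Gm k m =
      -1 / (12 * (ηv k : ℂ)) +
        (1 / (6 * Complex.I)) * (2 * Complex.I * (ηv k : ℂ)) ^ (-2 : ℤ) * Qm m) :
    IsUnit Gm.det ∧
    (Gm⁻¹ * Gp)ᵀ = (1 / ((η₁ : ℂ) ^ 2 - (η₂ : ℂ) ^ 2)) •
      !![((η₁ : ℂ) - η₂) ^ 2, 2 * (η₂ : ℂ) * ((η₁ : ℂ) - η₂);
         2 * (η₁ : ℂ) * ((η₁ : ℂ) - η₂), -(((η₁ : ℂ) - η₂) ^ 2)] ∧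
    (((Gm⁻¹ * Gp)ᵀ) 1 1).re < 0 := by
  subst hηv hQp hQm
  have hpos₁ : 0 < η₁ := h₂.trans h₁₂
  have hs : (η₁ : ℂ) + η₂ ≠ 0 := by exact_mod_cast (by linarith : η₁ + η₂ ≠ 0)
  have hd : (η₁ : ℂ) - η₂ ≠ 0 := by exact_mod_cast (by linarith : η₁ - η₂ ≠ 0)
  have hcast : ∀ k, (((![η₁, η₂] : Fin 2 → ℝ) k : ℝ) : ℂ) = ![(η₁ : ℂ), η₂] k := by
    intro k; fin_cases k <;> rfl
  simp only [hcast] at hGm hGp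
  have hη : ∀ k, ![(η₁ : ℂ), η₂] k ≠ 0 := by
    intro k; fin_cases k <;> simp [hpos₁.ne', h₂.ne']
  have hGm' := eq_diagonal_mul_of_bound_state_entries hη (q := ![(η₂ : ℂ), -η₁])
    (fun m ↦ by fin_cases m <;> simp) hGm
  have hGp' := eq_diagonal_mul_of_bound_state_entries hη (q := ![-(η₂ : ℂ), η₁])
    (fun m ↦ by fin_cases m <;> simp) hGp
  have hw : Invertible (diagonal fun k ↦ -1 / (12 * ![(η₁ : ℂ), η₂] k ^ 2)) :=
    invertibleOfIsUnitDet _ (by simp [Fin.prod_univ_two, hpos₁.ne', h₂.ne'])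
  rw [hGm', hGp', inv_mul_mul_cancel_left, two_soliton_inv_mul hs hd, transpose_transpose]
  refine ⟨?_, rfl, ?_⟩
  · rw [det_mul]
    exact (isUnit_det_of_invertible _).mul (by simp [det_two_soliton_minus, hs, hd])
  · simp only [Matrix.smul_apply, smul_eq_mul, of_apply, cons_val_one, cons_val_zero]
    norm_cast
    exact mul_neg_of_pos_of_neg (one_div_pos.2 (by nlinarith))
      (neg_neg_of_pos (pow_pos (sub_pos.2 h₁₂) 2))
end
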